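/- arXiv:1510.01597 — 9 statements merged into one kernel-verified Lean document; each statement's English description precedes it below -/
import Mathlib

section
/- Let n, m ≥ 1, let C, A₁, …, A_m be real symmetric n×n matrices and let b ∈ ℝ^m. Suppose X_k is a real symmetric positive definite n×n matrix with Tr(A_i · X_k) = b_i for all i = 1, …, m, and suppose U is an n×n real matrix with X_k = Uᵀ U. Suppose further that X* is a real symmetric positive semidefinite n×n matrix with Tr(A_i · X*) = b_i for all i and Tr(C · X*) < Tr(C · X_k). Then there exist a real symmetric n×n matrix X̂ and a symmetric diagonally dominant matrix Q such that X̂ = Uᵀ Q U, Tr(A_i · X̂) = b_i for all i, and Tr(C · X̂) < Tr(C · X_k). (In particular, the optimal value of iterate k+1 of the LP sequence, which minimizes Tr(C·X) subject to the affine constraints and X ∈ DD(U), is strictly smaller than Tr(C · X_k).) -/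
/-!
The identity lies in the interior of the cone of diagonally dominant matrices, so for every
matrix `N` the matrix `1 + t • N` is diagonally dominant once `t > 0` is small. Since `U` is
invertible, the direction `X* - X_k` can be written as `Uᵀ N U` with `N` symmetric, and then
`X_k + t (X* - X_k) = Uᵀ (1 + t N) U` is feasible (the constraints are affine) and has objective
value `Tr(C X_k) + t (Tr(C X*) - Tr(C X_k)) < Tr(C X_k)`.
-/

open scoped Matrix
/-- A real matrix is diagonally dominant if `A i i ≥ ∑_{j ≠ i} |A i j|` for every `i`. -/
def IsDiagDom {n : ℕ} (A : Matrix (Fin n) (Fin n) ℝ) : Prop :=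
  ∀ i, ∑ j ∈ Finset.univ.filter (fun j => j ≠ i), |A i j| ≤ A i i

namespace Matrix

variable {ι K : Type*} [Fintype ι] [DecidableEq ι]

theorem isUnit_det_of_dotProduct_transpose_mul_self_mulVec_pos [Field K] [Preorder K]
    {U : Matrix ι ι K} (h : ∀ x : ι → K, x ≠ 0 → 0 < x ⬝ᵥ (Uᵀ * U) *ᵥ x) : IsUnit U.det := by
  rw [isUnit_iff_ne_zero]
  intro hdet
  obtain ⟨x, hx, hUx⟩ := exists_mulVec_eq_zero_iff.mpr hdet
  have hpos := h x hx
  rw [← mulVec_mulVec, hUx, mulVec_zero, dotProduct_zero] at hpos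
  exact lt_irrefl _ hpos

theorem exists_isSymm_transpose_mul_mul_eq [CommRing K] {U Y : Matrix ι ι K}
    (hU : IsUnit U.det) (hY : Y.IsSymm) : ∃ N : Matrix ι ι K, N.IsSymm ∧ Uᵀ * N * U = Y := by
  refine ⟨U⁻¹ᵀ * Y * U⁻¹, ?_, ?_⟩
  · rw [IsSymm, transpose_mul, transpose_mul, transpose_transpose, hY.eq, Matrix.mul_assoc]
  · have hcancel : Uᵀ * U⁻¹ᵀ = 1 := by
      rw [← transpose_mul, nonsing_inv_mul U hU, transpose_one]
    rw [← Matrix.mul_assoc, ← Matrix.mul_assoc, hcancel, Matrix.one_mul,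
      nonsing_inv_mul_cancel_right _ _ hU]

omit [DecidableEq ι] in
theorem trace_mul_add_smul_sub [CommRing K] (A X Y : Matrix ι ι K) (t : K) :
    (A * (X + t • (Y - X))).trace = (A * X).trace + t * ((A * Y).trace - (A * X).trace) := by
  rw [Matrix.mul_add, Matrix.mul_smul, Matrix.mul_sub, trace_add, trace_smul, trace_sub,
    smul_eq_mul]

end Matrix

open Matrix

theorem isDiagDom_one_add_smul {n : ℕ} (N : Matrix (Fin n) (Fin n) ℝ) {t : ℝ} (ht : 0 ≤ t)
    (htN : t * ∑ i, ∑ j, |N i j| ≤ 1) : IsDiagDom (1 + t • N) := by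
  intro i
  have hrow : ∑ j ∈ Finset.univ.filter (fun j => j ≠ i), |N i j| + |N i i| ≤ ∑ i, ∑ j, |N i j| :=
    calc _ = ∑ j, |N i j| := by
          rw [Finset.filter_ne', Finset.sum_erase_add _ _ (Finset.mem_univ i)]
      _ ≤ ∑ i, ∑ j, |N i j| := Finset.single_le_sum (f := fun i => ∑ j, |N i j|)
          (fun i _ => Finset.sum_nonneg fun j _ => abs_nonneg _) (Finset.mem_univ i)
  have hoff : ∑ j ∈ Finset.univ.filter (fun j => j ≠ i), |(1 + t • N) i j|
      = t * ∑ j ∈ Finset.univ.filter (fun j => j ≠ i), |N i j| := by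
    rw [Finset.mul_sum]
    refine Finset.sum_congr rfl fun j hj => ?_
    rw [Finset.mem_filter] at hj
    rw [Matrix.add_apply, one_apply_ne' hj.2, Matrix.smul_apply, smul_eq_mul, zero_add, abs_mul,
      abs_of_nonneg ht]
  rw [hoff, Matrix.add_apply, one_apply_eq, Matrix.smul_apply, smul_eq_mul]
  have := mul_le_mul_of_nonneg_left hrow ht
  have := mul_le_mul_of_nonneg_left (neg_abs_le (N i i)) ht
  linarith

theorem exists_pos_isDiagDom_one_add_smul {n : ℕ} (N : Matrix (Fin n) (Fin n) ℝ) :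
    ∃ t : ℝ, 0 < t ∧ IsDiagDom (1 + t • N) := by
  set S := ∑ i, ∑ j, |N i j|
  have hS : 0 ≤ S := Finset.sum_nonneg fun i _ => Finset.sum_nonneg fun j _ => abs_nonneg _
  refine ⟨1 / (1 + S), by positivity, isDiagDom_one_add_smul N (by positivity) ?_⟩
  rw [div_mul_eq_mul_div, one_mul, div_le_one (by positivity)]
  linarith

theorem lp_strict_improvement_general {n m : ℕ}
    (C : Matrix (Fin n) (Fin n) ℝ)
    (A : Fin m → Matrix (Fin n) (Fin n) ℝ)
    (b : Fin m → ℝ)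
    (Xk : Matrix (Fin n) (Fin n) ℝ) (hXkSymm : Xk.IsSymm)
    (hXkPd : ∀ x : Fin n → ℝ, x ≠ 0 → 0 < dotProduct x (Xk.mulVec x))
    (hXkFeas : ∀ i, (A i * Xk).trace = b i)
    (U : Matrix (Fin n) (Fin n) ℝ) (hU : Xk = Uᵀ * U)
    (Xstar : Matrix (Fin n) (Fin n) ℝ) (hXsSymm : Xstar.IsSymm)
    (hXsFeas : ∀ i, (A i * Xstar).trace = b i)
    (hObj : (C * Xstar).trace < (C * Xk).trace) :
    ∃ (Xhat Q : Matrix (Fin n) (Fin n) ℝ),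
      Xhat.IsSymm ∧ Q.IsSymm ∧ IsDiagDom Q ∧
      Xhat = Uᵀ * Q * U ∧
      (∀ i, (A i * Xhat).trace = b i) ∧
      (C * Xhat).trace < (C * Xk).trace := by
  have hUdet : IsUnit U.det := isUnit_det_of_dotProduct_transpose_mul_self_mulVec_pos (hU ▸ hXkPd)
  have hdir : (Xstar - Xk).IsSymm := hXsSymm.sub hXkSymm
  obtain ⟨N, hNsymm, hN⟩ := exists_isSymm_transpose_mul_mul_eq hUdet hdir
  obtain ⟨t, ht, hdd⟩ := exists_pos_isDiagDom_one_add_smul N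
  refine ⟨Xk + t • (Xstar - Xk), 1 + t • N, hXkSymm.add (hdir.smul t),
    isSymm_one.add (hNsymm.smul t), hdd, ?_, fun i => ?_, ?_⟩
  · rw [Matrix.mul_add, Matrix.add_mul, Matrix.mul_one, Matrix.mul_smul, Matrix.smul_mul, hN, hU]
  · rw [trace_mul_add_smul_sub, hXkFeas, hXsFeas, sub_self, mul_zero, add_zero]
  · rw [trace_mul_add_smul_sub]
    linarith [mul_neg_of_pos_of_neg ht (sub_neg.mpr hObj)]

/-- Strict improvement of the LP iterates (Theorem 3.1 for the DSOS/LP sequence):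
if `X_k = Uᵀ U` is a symmetric positive definite feasible point and `X*` is a symmetric
psd feasible point with strictly smaller objective value, then there is a feasible point
`X̂ = Uᵀ Q U` with `Q` symmetric diagonally dominant whose objective value is strictly
smaller than that of `X_k`. -/
theorem lp_strict_improvement {n m : ℕ} (hn : 1 ≤ n) (hm : 1 ≤ m)
    (C : Matrix (Fin n) (Fin n) ℝ) (hC : C.IsSymm)
    (A : Fin m → Matrix (Fin n) (Fin n) ℝ) (hA : ∀ i, (A i).IsSymm)
    (b : Fin m → ℝ)
    (Xk : Matrix (Fin n) (Fin n) ℝ) (hXkSymm : Xk.IsSymm)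
    (hXkPd : ∀ x : Fin n → ℝ, x ≠ 0 → 0 < dotProduct x (Xk.mulVec x))
    (hXkFeas : ∀ i, (A i * Xk).trace = b i)
    (U : Matrix (Fin n) (Fin n) ℝ) (hU : Xk = Uᵀ * U)
    (Xstar : Matrix (Fin n) (Fin n) ℝ) (hXsSymm : Xstar.IsSymm)
    (hXsPsd : ∀ x : Fin n → ℝ, 0 ≤ dotProduct x (Xstar.mulVec x))
    (hXsFeas : ∀ i, (A i * Xstar).trace = b i)
    (hObj : (C * Xstar).trace < (C * Xk).trace) :
    ∃ (Xhat Q : Matrix (Fin n) (Fin n) ℝ),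
      Xhat.IsSymm ∧ Q.IsSymm ∧ IsDiagDom Q ∧
      Xhat = Uᵀ * Q * U ∧
      (∀ i, (A i * Xhat).trace = b i) ∧
      (C * Xhat).trace < (C * Xk).trace :=
  lp_strict_improvement_general C A b Xk hXkSymm hXkPd hXkFeas U hU Xstar hXsSymm hXsFeas hObj
end

section
/- Let n, m ≥ 1, let C, A₁, …, A_m be real symmetric n×n matrices and let b ∈ ℝ^m. Suppose X_k is a real symmetric positive definite n×n matrix with Tr(A_i · X_k) = b_i for all i = 1, …, m, and suppose U is an n×n real matrix with X_k = Uᵀ U. Suppose further that X* is a real symmetric positive semidefinite n×n matrix with Tr(A_i · X*) = b_i for all i and Tr(C · X*) < Tr(C · X_k). Then there exist a real symmetric n×n matrix X̂ and a symmetric scaled diagonally dominant matrix Q such that X̂ = Uᵀ Q U, Tr(A_i · X̂) = b_i for all i, and Tr(C · X̂) < Tr(C · X_k). (In particular, the optimal value of iterate k+1 of the SOCP sequence strictly improves over Tr(C · X_k).) -/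
/-!
Since `X_k = Uᵀ U` is positive definite, `U` is invertible and `X* = Uᵀ M U` with
`M = U⁻ᵀ X* U⁻¹` positive semidefinite. For small `t > 0` the matrix `Q = (1 - t) I + t M` is
diagonally dominant: its diagonal is at least `1 - t`, while its off-diagonal row sums are `O(t)`.
Then `X̂ = Uᵀ Q U = (1 - t) X_k + t X*` lies on the segment from `X_k` towards `X*`, so it is
feasible and has strictly smaller objective value.
-/

open scoped Matrix

/-- A real matrix is scaled diagonally dominant if there is a diagonal matrix `D` with
positive diagonal entries such that `D A D` is diagonally dominant. -/
def IsScaledDiagDom {n : ℕ} (A : Matrix (Fin n) (Fin n) ℝ) : Prop :=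
  ∃ d : Fin n → ℝ, (∀ i, 0 < d i) ∧
    IsDiagDom (Matrix.diagonal d * A * Matrix.diagonal d)

theorem IsDiagDom.isScaledDiagDom {n : ℕ} {A : Matrix (Fin n) (Fin n) ℝ} (h : IsDiagDom A) :
    IsScaledDiagDom A :=
  ⟨1, fun _ => one_pos, by simpa using h⟩

theorem exists_pos_isDiagDom_one_sub_smul_one_add_smul {n : ℕ} {M : Matrix (Fin n) (Fin n) ℝ}
    (hM : ∀ i, 0 ≤ M i i) : ∃ t : ℝ, 0 < t ∧ IsDiagDom ((1 - t) • 1 + t • M) := by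
  set r : Fin n → ℝ := fun i => ∑ j ∈ Finset.univ.filter (fun j => j ≠ i), |M i j|
  have hr : ∀ i, 0 ≤ r i := fun i => Finset.sum_nonneg fun j _ => abs_nonneg _
  set c := ∑ i, r i
  have hc : 0 ≤ c := Finset.sum_nonneg fun i _ => hr i
  refine ⟨(1 + c)⁻¹, by positivity, fun i => ?_⟩
  set t := (1 + c)⁻¹
  have ht : 0 < t := by positivity
  have htc : t * (1 + c) = 1 := inv_mul_cancel₀ (by positivity)
  calc ∑ j ∈ Finset.univ.filter (fun j => j ≠ i),
        |((1 - t) • (1 : Matrix (Fin n) (Fin n) ℝ) + t • M) i j|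
      = t * r i := by
        rw [Finset.mul_sum]
        refine Finset.sum_congr rfl fun j hj => ?_
        simp [Matrix.one_apply_ne' (Finset.mem_filter.1 hj).2, abs_mul, abs_of_pos ht]
    _ ≤ t * c :=
        mul_le_mul_of_nonneg_left (Finset.single_le_sum (fun i _ => hr i) (Finset.mem_univ i)) ht.le
    _ ≤ ((1 - t) • (1 : Matrix (Fin n) (Fin n) ℝ) + t • M) i i := by
        simp only [Matrix.add_apply, Matrix.smul_apply, Matrix.one_apply_eq, smul_eq_mul]
        linarith [mul_nonneg ht.le (hM i)]

theorem Matrix.isUnit_det_of_posDef_transpose_mul_self {ι K : Type*} [Fintype ι] [DecidableEq ι]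
    [Field K] [PartialOrder K] [StarRing K] {U : Matrix ι ι K} (h : (Uᵀ * U).PosDef) :
    IsUnit U.det := by
  have := (Matrix.isUnit_iff_isUnit_det _).1 h.isUnit
  rw [det_mul, det_transpose] at this
  exact isUnit_of_mul_isUnit_right this

theorem Matrix.transpose_mul_transpose_inv_mul_inv_mul {ι K : Type*} [Fintype ι] [DecidableEq ι]
    [Field K] {U : Matrix ι ι K} (hU : IsUnit U.det) (X : Matrix ι ι K) :
    Uᵀ * ((U⁻¹)ᵀ * X * U⁻¹) * U = X := by
  rw [transpose_nonsing_inv, ← Matrix.mul_assoc, ← Matrix.mul_assoc,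
    mul_nonsing_inv _ (by simpa using hU), Matrix.one_mul, nonsing_inv_mul_cancel_right _ _ hU]

theorem Matrix.IsSymm.transpose_mul_mul {ι κ α : Type*} [Fintype ι] [CommSemiring α]
    {Q : Matrix ι ι α} (hQ : Q.IsSymm) (U : Matrix ι κ α) : (Uᵀ * Q * U).IsSymm := by
  simp [IsSymm, transpose_mul, hQ.eq, Matrix.mul_assoc]

theorem socp_strict_improvement_general {n m : ℕ}
    (C : Matrix (Fin n) (Fin n) ℝ)
    (A : Fin m → Matrix (Fin n) (Fin n) ℝ)
    (b : Fin m → ℝ)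
    (Xk : Matrix (Fin n) (Fin n) ℝ)
    (hXkPd : ∀ x : Fin n → ℝ, x ≠ 0 → 0 < dotProduct x (Xk.mulVec x))
    (hXkFeas : ∀ i, (A i * Xk).trace = b i)
    (U : Matrix (Fin n) (Fin n) ℝ) (hU : Xk = Uᵀ * U)
    (Xstar : Matrix (Fin n) (Fin n) ℝ) (hXsSymm : Xstar.IsSymm)
    (hXsPsd : ∀ x : Fin n → ℝ, 0 ≤ dotProduct x (Xstar.mulVec x))
    (hXsFeas : ∀ i, (A i * Xstar).trace = b i)
    (hObj : (C * Xstar).trace < (C * Xk).trace) :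
    ∃ (Xhat Q : Matrix (Fin n) (Fin n) ℝ),
      Xhat.IsSymm ∧ Q.IsSymm ∧ IsScaledDiagDom Q ∧
      Xhat = Uᵀ * Q * U ∧
      (∀ i, (A i * Xhat).trace = b i) ∧
      (C * Xhat).trace < (C * Xk).trace := by
  have hUdet : IsUnit U.det := Matrix.isUnit_det_of_posDef_transpose_mul_self <|
    .of_dotProduct_mulVec_pos (by simpa using U.isSymm_transpose_mul_self) fun x hx => by
      simpa [← hU] using hXkPd x hx
  have hXs : Xstar.PosSemidef :=
    .of_dotProduct_mulVec_nonneg (by simpa using hXsSymm) fun x => by simpa using hXsPsd x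
  set M := (U⁻¹)ᵀ * Xstar * U⁻¹
  have hM : M.PosSemidef := by simpa using hXs.conjTranspose_mul_mul_same U⁻¹
  obtain ⟨t, ht, hQ⟩ :=
    exists_pos_isDiagDom_one_sub_smul_one_add_smul fun i => hM.diag_nonneg (i := i)
  set Q : Matrix (Fin n) (Fin n) ℝ := (1 - t) • 1 + t • M
  have hQsymm : Q.IsSymm :=
    (Matrix.isSymm_one.smul _).add ((Matrix.isHermitian_iff_isSymm.1 hM.isHermitian).smul _)
  have hXhat : Uᵀ * Q * U = (1 - t) • Xk + t • Xstar := by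
    simp only [Q, M, Matrix.mul_add, Matrix.add_mul, Matrix.mul_smul, Matrix.smul_mul,
      Matrix.mul_one, hU, Matrix.transpose_mul_transpose_inv_mul_inv_mul hUdet]
  have htrace (B : Matrix (Fin n) (Fin n) ℝ) :
      (B * (Uᵀ * Q * U)).trace = (1 - t) * (B * Xk).trace + t * (B * Xstar).trace := by
    simp [hXhat, Matrix.mul_add, Matrix.trace_add]
  refine ⟨Uᵀ * Q * U, Q, ?_, hQsymm, hQ.isScaledDiagDom, rfl, fun i => ?_, ?_⟩
  · exact hQsymm.transpose_mul_mul U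
  · rw [htrace, hXkFeas, hXsFeas]; ring
  · rw [htrace]; linarith [mul_lt_mul_of_pos_left hObj ht]

/-- Strict improvement of the SOCP iterates (Theorem 3.1 for the SDSOS/SOCP sequence):
if `X_k = Uᵀ U` is a symmetric positive definite feasible point and `X*` is a symmetric
psd feasible point with strictly smaller objective value, then there is a feasible point
`X̂ = Uᵀ Q U` with `Q` symmetric scaled diagonally dominant whose objective value is
strictly smaller than that of `X_k`. -/
theorem socp_strict_improvement {n m : ℕ} (hn : 1 ≤ n) (hm : 1 ≤ m)
    (C : Matrix (Fin n) (Fin n) ℝ) (hC : C.IsSymm)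
    (A : Fin m → Matrix (Fin n) (Fin n) ℝ) (hA : ∀ i, (A i).IsSymm)
    (b : Fin m → ℝ)
    (Xk : Matrix (Fin n) (Fin n) ℝ) (hXkSymm : Xk.IsSymm)
    (hXkPd : ∀ x : Fin n → ℝ, x ≠ 0 → 0 < dotProduct x (Xk.mulVec x))
    (hXkFeas : ∀ i, (A i * Xk).trace = b i)
    (U : Matrix (Fin n) (Fin n) ℝ) (hU : Xk = Uᵀ * U)
    (Xstar : Matrix (Fin n) (Fin n) ℝ) (hXsSymm : Xstar.IsSymm)
    (hXsPsd : ∀ x : Fin n → ℝ, 0 ≤ dotProduct x (Xstar.mulVec x))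
    (hXsFeas : ∀ i, (A i * Xstar).trace = b i)
    (hObj : (C * Xstar).trace < (C * Xk).trace) :
    ∃ (Xhat Q : Matrix (Fin n) (Fin n) ℝ),
      Xhat.IsSymm ∧ Q.IsSymm ∧ IsScaledDiagDom Q ∧
      Xhat = Uᵀ * Q * U ∧
      (∀ i, (A i * Xhat).trace = b i) ∧
      (C * Xhat).trace < (C * Xk).trace :=
  socp_strict_improvement_general C A b Xk hXkPd hXkFeas U hU Xstar hXsSymm hXsPsd hXsFeas hObj
end

section
/- Let n ≥ 2 and let A be a real symmetric n×n matrix. Then A is scaled diagonally dominant if and only if A can be written as A = Σ_{i<j} M^{ij}, where for each pair i < j the matrix M^{ij} is a real symmetric n×n matrix that is zero everywhere except possibly in the entries (i,i), (i,j), (j,i), (j,j), and whose 2×2 submatrix [[M^{ij}_{ii}, M^{ij}_{ij}], [M^{ij}_{ji}, M^{ij}_{jj}]] is symmetric positive semidefinite. -/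
open scoped Matrix

/-!
If `D A D` is diagonally dominant with `D = diag d`, split the diagonal entry of row `i` as
`A i i = ∑_{j ≠ i} w i j` with `w i j = |A i j| d j / d i + eᵢ`, where `eᵢ ≥ 0` is an equal share
of the slack of row `i`. Then `w i j * w j i ≥ A i j ^ 2`, so the blocks
`[[w i j, A i j], [A i j, w j i]]` are positive semidefinite, and they sum to `A`.

Conversely, by the triangle inequality a sum of such blocks has a comparison matrix
(diagonal `A i i`, off-diagonal `-|A i j|`) whose quadratic form is nonnegative on nonnegative
vectors. A symmetric matrix with nonpositive off-diagonal entries and this property has a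
positive vector `d` with `B d ≥ 0`: by induction on the size, passing to the Schur complement
of the `(0, 0)` entry. For the comparison matrix, `B d ≥ 0` says exactly that `D A D` is
diagonally dominant.
-/

open Finset Matrix

theorem Finset.sum_filter_lt_add_swap {ι M : Type*} [Fintype ι] [LinearOrder ι]
    [AddCommMonoid M] (f : ι → ι → M) :
    ∑ p ∈ univ.filter (fun p : ι × ι => p.1 < p.2), (f p.1 p.2 + f p.2 p.1) =
      ∑ i, ∑ j ∈ univ.filter (fun j => j ≠ i), f i j := by
  have split (i j : ι) : (if j ≠ i then f i j else 0) =
      (if i < j then f i j else 0) + (if j < i then f i j else 0) := by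
    rcases lt_trichotomy i j with h | rfl | h
    · simp [h, h.ne', h.not_gt]
    · simp
    · simp [h, h.ne, h.not_gt]
  simp only [sum_filter, ← univ_product_univ, sum_product, split, sum_add_distrib]
  rw [sum_comm (f := fun i j => if i < j then f j i else 0)]

theorem isDiagDom_diagonal_mul_mul_diagonal_iff {n : ℕ} (A : Matrix (Fin n) (Fin n) ℝ)
    {d : Fin n → ℝ} (hd : ∀ i, 0 < d i) :
    IsDiagDom (diagonal d * A * diagonal d) ↔
      ∀ i, ∑ j ∈ univ.filter (fun j => j ≠ i), |A i j| * d j ≤ A i i * d i := by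
  have habs (i j : Fin n) : |d i * (A i j * d j)| = d i * (|A i j| * d j) := by
    rw [abs_mul, abs_mul, abs_of_pos (hd i), abs_of_pos (hd j)]
  simp only [IsDiagDom, mul_diagonal, diagonal_mul, mul_assoc, habs, ← mul_sum]
  exact forall_congr' fun i => mul_le_mul_iff_right₀ (hd i)

theorem isScaledDiagDom_iff {n : ℕ} (A : Matrix (Fin n) (Fin n) ℝ) :
    IsScaledDiagDom A ↔ ∃ d : Fin n → ℝ, (∀ i, 0 < d i) ∧
      ∀ i, ∑ j ∈ univ.filter (fun j => j ≠ i), |A i j| * d j ≤ A i i * d i :=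
  exists_congr fun _ => and_congr_right fun hd => isDiagDom_diagonal_mul_mul_diagonal_iff A hd

theorem two_by_two_form_nonneg {a b c : ℝ} (ha : 0 ≤ a) (hc : 0 ≤ c) (hb : b * b ≤ a * c)
    (s t : ℝ) : 0 ≤ s * s * a + s * t * b + t * s * b + t * t * c := by
  rcases ha.eq_or_lt with rfl | ha
  · have : b = 0 := by nlinarith
    subst this
    nlinarith [mul_self_nonneg t]
  · have : 0 ≤ a * (s * s * a + s * t * b + t * s * b + t * t * c) := by
      nlinarith [sq_nonneg (a * s + b * t), mul_self_nonneg t]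
    exact nonneg_of_mul_nonneg_right (by linarith) ha

namespace Matrix

section PairDecomposition

variable {ι : Type*}

def pairMatrix [DecidableEq ι] (A : Matrix ι ι ℝ) (w : ι → ι → ℝ) (i j : ι) : Matrix ι ι ℝ :=
  single i i (w i j) + single i j (A i j) + (single j j (w j i) + single j i (A j i))

theorem sum_pairMatrix [Fintype ι] [LinearOrder ι] (A : Matrix ι ι ℝ) {w : ι → ι → ℝ}
    (hw : ∀ i, ∑ j ∈ univ.filter (fun j => j ≠ i), w i j = A i i) :
    ∑ p ∈ univ.filter (fun p : ι × ι => p.1 < p.2), pairMatrix A w p.1 p.2 = A := by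
  have row (i : ι) : ∑ j, single i j (A i j) =
      single i i (A i i) + ∑ j ∈ univ.filter (fun j => j ≠ i), single i j (A i j) := by
    rw [filter_ne', add_sum_erase _ (fun j => single i j (A i j)) (mem_univ i)]
  have diag (i : ι) : ∑ j ∈ univ.filter (fun j => j ≠ i), single i i (w i j) =
      single i i (A i i) := by
    rw [← hw i]
    exact (map_sum (singleAddMonoidHom (α := ℝ) i i) _ _).symm
  unfold pairMatrix
  rw [sum_filter_lt_add_swap (fun i j => single i i (w i j) + single i j (A i j))]
  conv_rhs => rw [matrix_eq_sum_single A]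
  simp only [row, sum_add_distrib, diag]

variable [DecidableEq ι]

theorem pairMatrix_isSymm {A : Matrix ι ι ℝ} (hA : A.IsSymm) (w : ι → ι → ℝ) (i j : ι) :
    (pairMatrix A w i j).IsSymm := by
  simp only [IsSymm, pairMatrix, transpose_add, transpose_single, hA.apply]
  abel

theorem pairMatrix_apply_eq_zero (A : Matrix ι ι ℝ) (w : ι → ι → ℝ) {i j k l : ι}
    (h : ¬((k = i ∨ k = j) ∧ (l = i ∨ l = j))) : pairMatrix A w i j k l = 0 := by
  simp only [pairMatrix, add_apply, single_apply]
  grind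

theorem pairMatrix_form_nonneg {A : Matrix ι ι ℝ} (hA : A.IsSymm) {w : ι → ι → ℝ}
    (hw : ∀ i j, 0 ≤ w i j) (hAw : ∀ i j, |A i j| * |A j i| ≤ w i j * w j i) {i j : ι}
    (hij : i ≠ j) (s t : ℝ) :
    let P := pairMatrix A w i j
    0 ≤ s * s * P i i + s * t * P i j + t * s * P j i + t * t * P j j := by
  have hAij := hAw i j
  rw [hA.apply, abs_mul_abs_self] at hAij
  simpa [pairMatrix, single_apply, hij, hij.symm, hA.apply] using
    two_by_two_form_nonneg (hw i j) (hw j i) hAij s t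

theorem exists_pairWeights [Fintype ι] (hcard : 2 ≤ Fintype.card ι) {A : Matrix ι ι ℝ}
    {d : ι → ℝ} (hd : ∀ i, 0 < d i)
    (hrow : ∀ i, ∑ j ∈ univ.filter (fun j => j ≠ i), |A i j| * d j ≤ A i i * d i) :
    ∃ w : ι → ι → ℝ, (∀ i j, 0 ≤ w i j) ∧ (∀ i j, |A i j| * |A j i| ≤ w i j * w j i) ∧
      ∀ i, ∑ j ∈ univ.filter (fun j => j ≠ i), w i j = A i i := by
  have hcard' (i : ι) : ((univ.filter (fun j => j ≠ i)).card : ℝ) = Fintype.card ι - 1 := by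
    rw [filter_ne', card_erase_of_mem (mem_univ i), card_univ,
      Nat.cast_sub (by omega : 1 ≤ Fintype.card ι), Nat.cast_one]
  have hpos : (0 : ℝ) < Fintype.card ι - 1 := by
    have : (2 : ℝ) ≤ Fintype.card ι := by exact_mod_cast hcard
    linarith
  set e : ι → ℝ := fun i =>
    (A i i - (∑ j ∈ univ.filter (fun j => j ≠ i), |A i j| * d j) / d i) / (Fintype.card ι - 1)
  have he (i : ι) : 0 ≤ e i := by
    refine div_nonneg (sub_nonneg.2 ?_) hpos.le
    rw [div_le_iff₀ (hd i)]
    exact hrow i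
  refine ⟨fun i j => |A i j| * d j / d i + e i, fun i j => ?_, fun i j => ?_, fun i => ?_⟩
  · have := he i; have := hd i; have := hd j
    positivity
  · have hprod : |A i j| * |A j i| = (|A i j| * d j / d i) * (|A j i| * d i / d j) := by
      field_simp [(hd i).ne', (hd j).ne']
    rw [hprod]
    have := hd i; have := hd j
    gcongr
    · have := he i; positivity
    · linarith [he i]
    · linarith [he j]
  · rw [sum_add_distrib, sum_const, nsmul_eq_mul, hcard', ← sum_div]
    simp only [e]
    field_simp [hpos.ne']
    ring

end PairDecomposition

section Comparison

variable {ι : Type*}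

def IsCopositive [Fintype ι] (B : Matrix ι ι ℝ) : Prop :=
  ∀ x, 0 ≤ x → 0 ≤ x ⬝ᵥ B *ᵥ x

theorem dotProduct_mulVec_le_of_le [Fintype ι] {B C : Matrix ι ι ℝ}
    (h : ∀ k l, B k l ≤ C k l) {x : ι → ℝ} (hx : 0 ≤ x) : x ⬝ᵥ B *ᵥ x ≤ x ⬝ᵥ C *ᵥ x := by
  simp only [dotProduct, mulVec]
  gcongr with k _ l _
  exacts [hx k, hx l, h k l]

variable [DecidableEq ι]

theorem dotProduct_mulVec_eq_of_apply_eq_zero [Fintype ι] {B : Matrix ι ι ℝ} {i j : ι}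
    (hij : i ≠ j) (hB : ∀ k l, ¬((k = i ∨ k = j) ∧ (l = i ∨ l = j)) → B k l = 0)
    (x : ι → ℝ) :
    x ⬝ᵥ B *ᵥ x =
      x i * x i * B i i + x i * x j * B i j + x j * x i * B j i + x j * x j * B j j := by
  have hsub : ({i, j} : Finset ι) ⊆ univ := subset_univ _
  have hrow (k : ι) : (B *ᵥ x) k = B k i * x i + B k j * x j := by
    rw [mulVec, dotProduct, ← sum_subset hsub, sum_pair hij]
    intro l _ hl
    simp only [mem_insert, mem_singleton, not_or] at hl
    simp [hB k l (by tauto)]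
  rw [dotProduct, ← sum_subset hsub, sum_pair hij]
  · simp only [hrow]
    ring
  · intro k _ hk
    simp only [mem_insert, mem_singleton, not_or] at hk
    simp [hrow, hB k i (by tauto), hB k j (by tauto)]

def comparison (A : Matrix ι ι ℝ) : Matrix ι ι ℝ :=
  of fun i j => if i = j then A i i else -|A i j|

theorem comparison_apply_nonpos (A : Matrix ι ι ℝ) {i j : ι} (hij : i ≠ j) :
    comparison A i j ≤ 0 := by
  simp [comparison, hij]

theorem comparison_isSymm {A : Matrix ι ι ℝ} (hA : A.IsSymm) : (comparison A).IsSymm := by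
  ext i j
  simp only [comparison, transpose_apply, of_apply, hA.apply, eq_comm (a := j)]
  split_ifs with h
  · rw [h]
  · rfl

theorem comparison_mulVec_apply [Fintype ι] (A : Matrix ι ι ℝ) (d : ι → ℝ) (i : ι) :
    (comparison A *ᵥ d) i =
      A i i * d i - ∑ j ∈ univ.filter (fun j => j ≠ i), |A i j| * d j := by
  rw [mulVec, dotProduct, filter_ne', ← add_sum_erase _ _ (mem_univ i), sub_eq_add_neg,
    ← sum_neg_distrib]
  congr 1
  · simp [comparison]
  · refine sum_congr rfl fun j hj => ?_
    simp [comparison, Ne.symm (ne_of_mem_erase hj)]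

theorem sum_comparison_apply_le {κ : Type*} (s : Finset κ) (M : κ → Matrix ι ι ℝ) (k l : ι) :
    (∑ p ∈ s, comparison (M p)) k l ≤ comparison (∑ p ∈ s, M p) k l := by
  by_cases hkl : k = l
  · simp [comparison, hkl, sum_apply]
  · simpa [comparison, hkl, sum_apply] using abs_sum_le_sum_abs (fun p => M p k l) s

theorem isCopositive_comparison_of_pair [Fintype ι] {M : Matrix ι ι ℝ} (hM : M.IsSymm)
    {i j : ι} (hij : i ≠ j) (hsupp : ∀ k l, ¬((k = i ∨ k = j) ∧ (l = i ∨ l = j)) → M k l = 0)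
    (hpsd : ∀ s t : ℝ, 0 ≤ s * s * M i i + s * t * M i j + t * s * M j i + t * t * M j j) :
    (comparison M).IsCopositive := by
  intro x hx
  have hsupp' (k l : ι) (h : ¬((k = i ∨ k = j) ∧ (l = i ∨ l = j))) : comparison M k l = 0 := by
    by_cases hkl : k = l
    · subst hkl
      simp [comparison, hsupp k k h]
    · simp [comparison, hkl, hsupp k l h]
  rw [dotProduct_mulVec_eq_of_apply_eq_zero hij hsupp' x]
  simp only [comparison, of_apply, if_pos, hij, hij.symm, if_false, ← hM.apply i j]
  rcases abs_cases (M j i) with ⟨habs, -⟩ | ⟨habs, -⟩ <;> rw [habs]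
  · simpa [hM.apply] using hpsd (x i) (-x j)
  · simpa [hM.apply] using hpsd (x i) (x j)

theorem isCopositive_comparison_sum [Fintype ι] {κ : Type*} (s : Finset κ)
    (M : κ → Matrix ι ι ℝ) (hM : ∀ p ∈ s, (comparison (M p)).IsCopositive) :
    (comparison (∑ p ∈ s, M p)).IsCopositive := by
  intro x hx
  refine le_trans ?_ (dotProduct_mulVec_le_of_le (sum_comparison_apply_le s M) hx)
  rw [sum_mulVec, dotProduct_sum]
  exact sum_nonneg fun p hp => hM p hp x hx

end Comparison

section SchurComplement

variable {n : ℕ} (B : Matrix (Fin (n + 1)) (Fin (n + 1)) ℝ)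

noncomputable def schurZero : Matrix (Fin n) (Fin n) ℝ :=
  B.submatrix Fin.succ Fin.succ -
    (B 0 0)⁻¹ • vecMulVec (fun i => B i.succ 0) (fun i => B i.succ 0)

theorem mulVec_vecCons_zero (hB : B.IsSymm) (c : ℝ) (y : Fin n → ℝ) :
    (B *ᵥ vecCons c y) 0 = B 0 0 * c + (fun i => B i.succ 0) ⬝ᵥ y := by
  simp [mulVec, dotProduct, Fin.sum_univ_succ, hB.apply]

theorem mulVec_vecCons_succ (c : ℝ) (y : Fin n → ℝ) (k : Fin n) :
    (B *ᵥ vecCons c y) k.succ = B k.succ 0 * c + (B.submatrix Fin.succ Fin.succ *ᵥ y) k := by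
  simp [mulVec, dotProduct, Fin.sum_univ_succ]

theorem vecCons_dotProduct_mulVec_vecCons (hB : B.IsSymm) (c : ℝ) (y : Fin n → ℝ) :
    vecCons c y ⬝ᵥ B *ᵥ vecCons c y =
      B 0 0 * c * c + 2 * c * ((fun i => B i.succ 0) ⬝ᵥ y) +
        y ⬝ᵥ B.submatrix Fin.succ Fin.succ *ᵥ y := by
  rw [cons_dotProduct, vecHead, mulVec_vecCons_zero B hB]
  simp only [vecTail, Function.comp_def, mulVec_vecCons_succ]
  rw [show (fun k : Fin n => B k.succ 0 * c + (B.submatrix Fin.succ Fin.succ *ᵥ y) k) =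
    c • (fun k => B k.succ 0) + B.submatrix Fin.succ Fin.succ *ᵥ y by ext; simp [mul_comm],
    dotProduct_add, dotProduct_smul, dotProduct_comm y]
  simp only [smul_eq_mul]
  ring

theorem schurZero_mulVec_apply (y : Fin n → ℝ) (k : Fin n) :
    (schurZero B *ᵥ y) k =
      (B *ᵥ vecCons (-((fun i => B i.succ 0) ⬝ᵥ y) / B 0 0) y) k.succ := by
  simp only [schurZero, sub_mulVec, smul_mulVec, vecMulVec_mulVec, mulVec_vecCons_succ]
  simp only [Pi.sub_apply, Pi.smul_apply, op_smul_eq_smul, smul_eq_mul]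
  ring

theorem schurZero_isSymm (hB : B.IsSymm) : (schurZero B).IsSymm :=
  (hB.submatrix _).sub (IsSymm.smul (transpose_vecMulVec _ _) _)

theorem schurZero_apply_nonpos (hZ : ∀ i j, i ≠ j → B i j ≤ 0) (ha : 0 ≤ B 0 0) {i j : Fin n}
    (hij : i ≠ j) : schurZero B i j ≤ 0 := by
  have : 0 ≤ (B 0 0)⁻¹ * (B i.succ 0 * B j.succ 0) :=
    mul_nonneg (inv_nonneg.2 ha)
      (mul_nonneg_of_nonpos_of_nonpos (hZ _ _ i.succ_ne_zero) (hZ _ _ j.succ_ne_zero))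
  simp only [schurZero, sub_apply, smul_apply, vecMulVec_apply, submatrix_apply, smul_eq_mul]
  linarith [hZ _ _ (Fin.succ_injective _ |>.ne hij)]

theorem vecCons_nonneg_iff {c : ℝ} {y : Fin n → ℝ} : 0 ≤ vecCons c y ↔ 0 ≤ c ∧ 0 ≤ y := by
  simp [Pi.le_def, Fin.forall_fin_succ]

variable {B} (hB : B.IsSymm) (hcop : B.IsCopositive)
include hB hcop

theorem IsCopositive.submatrix_succ : (B.submatrix Fin.succ Fin.succ).IsCopositive :=
  fun y hy => by
    simpa [vecCons_dotProduct_mulVec_vecCons B hB] using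
      hcop (vecCons 0 y) (vecCons_nonneg_iff.2 ⟨le_rfl, hy⟩)

theorem IsCopositive.apply_zero_zero_nonneg : 0 ≤ B 0 0 := by
  simpa [vecCons_dotProduct_mulVec_vecCons B hB] using
    hcop (vecCons 1 0) (vecCons_nonneg_iff.2 ⟨zero_le_one, le_rfl⟩)

theorem IsCopositive.apply_zero_zero_pos {k : Fin n} (hk : B k.succ 0 < 0) : 0 < B 0 0 := by
  have hform (c : ℝ) (hc : 0 ≤ c) :
      0 ≤ B 0 0 * c * c + 2 * c * B k.succ 0 + B k.succ k.succ := by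
    simpa [vecCons_dotProduct_mulVec_vecCons B hB] using hcop (vecCons c (Pi.single k 1))
      (vecCons_nonneg_iff.2 ⟨hc, Pi.single_nonneg.2 zero_le_one⟩)
  refine (hcop.apply_zero_zero_nonneg hB).lt_of_ne fun h0 => ?_
  have hkk := hform 0 le_rfl
  set c := (B k.succ k.succ + 1) / (-2 * B k.succ 0)
  have hc : 2 * c * B k.succ 0 = -(B k.succ k.succ + 1) := by
    simp only [c]
    field_simp [hk.ne]
  have := hform c (div_nonneg (by linarith) (by linarith))
  rw [← h0, hc] at this
  linarith

theorem isCopositive_schurZero (hZ : ∀ i j, i ≠ j → B i j ≤ 0) (ha : 0 < B 0 0) :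
    (schurZero B).IsCopositive := by
  intro y hy
  set b : Fin n → ℝ := fun i => B i.succ 0
  have hb : b ≤ 0 := fun i => hZ _ _ i.succ_ne_zero
  -- the form of `B` at `(c, y)` is least at this `c`, where it is the form of `schurZero B` at `y`
  have hc : 0 ≤ -(b ⬝ᵥ y) / B 0 0 :=
    div_nonneg (neg_nonneg.2 (by simpa using dotProduct_le_dotProduct_of_nonneg_right hb hy))
      ha.le
  have := hcop _ (vecCons_nonneg_iff.2 ⟨hc, hy⟩)
  rw [vecCons_dotProduct_mulVec_vecCons B hB] at this
  rw [schurZero, sub_mulVec, smul_mulVec, vecMulVec_mulVec, dotProduct_sub, dotProduct_smul,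
    op_smul_eq_smul, dotProduct_smul, dotProduct_comm y b, smul_eq_mul, smul_eq_mul]
  field_simp at this ⊢
  linarith

theorem exists_pos_mulVec_nonneg_of_col_eq_zero (hb : ∀ k : Fin n, B k.succ 0 = 0)
    {d : Fin n → ℝ} (hd : ∀ i, 0 < d i) (hBd : 0 ≤ B.submatrix Fin.succ Fin.succ *ᵥ d) :
    ∃ d' : Fin (n + 1) → ℝ, (∀ i, 0 < d' i) ∧ 0 ≤ B *ᵥ d' := by
  refine ⟨vecCons 1 d, by simp [Fin.forall_fin_succ, hd], ?_⟩
  rw [Pi.le_def, Fin.forall_fin_succ, mulVec_vecCons_zero B hB]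
  have hb' : (fun i : Fin n => B i.succ 0) = 0 := funext hb
  refine ⟨by simpa [hb'] using hcop.apply_zero_zero_nonneg hB, fun k => ?_⟩
  simpa [mulVec_vecCons_succ, hb k] using hBd k

omit hcop in
theorem exists_pos_mulVec_nonneg_of_schurZero (hZ : ∀ i j, i ≠ j → B i j ≤ 0)
    (ha : 0 < B 0 0) {k : Fin n} (hk : B k.succ 0 < 0) {d : Fin n → ℝ} (hd : ∀ i, 0 < d i)
    (hSd : 0 ≤ schurZero B *ᵥ d) :
    ∃ d' : Fin (n + 1) → ℝ, (∀ i, 0 < d' i) ∧ 0 ≤ B *ᵥ d' := by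
  have hbd : (fun i => B i.succ 0) ⬝ᵥ d < 0 :=
    sum_neg' (fun i _ => mul_nonpos_of_nonpos_of_nonneg (hZ _ _ i.succ_ne_zero) (hd i).le)
      ⟨k, mem_univ k, mul_neg_of_neg_of_pos hk (hd k)⟩
  refine ⟨vecCons (-((fun i => B i.succ 0) ⬝ᵥ d) / B 0 0) d,
    by simp [Fin.forall_fin_succ, hd, div_pos (neg_pos.2 hbd) ha], ?_⟩
  rw [Pi.le_def, Fin.forall_fin_succ, mulVec_vecCons_zero B hB]
  refine ⟨?_, fun k => schurZero_mulVec_apply B d k ▸ hSd k⟩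
  rw [Pi.zero_apply, mul_div_cancel₀ _ ha.ne', neg_add_cancel]

end SchurComplement

theorem exists_pos_mulVec_nonneg_of_isCopositive : ∀ {n : ℕ} {B : Matrix (Fin n) (Fin n) ℝ},
    B.IsSymm → (∀ i j, i ≠ j → B i j ≤ 0) → B.IsCopositive →
    ∃ d, (∀ i, 0 < d i) ∧ 0 ≤ B *ᵥ d
  | 0, _, _, _, _ => ⟨0, finZeroElim, finZeroElim⟩
  | n + 1, B, hB, hZ, hcop => by
    by_cases hb : ∀ k : Fin n, B k.succ 0 = 0
    · obtain ⟨d, hd, hBd⟩ := exists_pos_mulVec_nonneg_of_isCopositive (hB.submatrix _)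
        (fun i j hij => hZ _ _ (Fin.succ_injective _ |>.ne hij)) (hcop.submatrix_succ hB)
      exact exists_pos_mulVec_nonneg_of_col_eq_zero hB hcop hb hd hBd
    · obtain ⟨k, hk⟩ : ∃ k : Fin n, B k.succ 0 < 0 := by
        by_contra! h
        exact hb fun k => le_antisymm (hZ _ _ k.succ_ne_zero) (h k)
      have ha := hcop.apply_zero_zero_pos hB hk
      obtain ⟨d, hd, hSd⟩ := exists_pos_mulVec_nonneg_of_isCopositive (schurZero_isSymm B hB)
        (fun i j => schurZero_apply_nonpos B hZ ha.le) (isCopositive_schurZero hB hcop hZ ha)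
      exact exists_pos_mulVec_nonneg_of_schurZero hB hZ ha hk hd hSd

end Matrix

/-- A real symmetric matrix (`n ≥ 2`) is scaled diagonally dominant if and only if it is a
sum over pairs `i < j` of symmetric matrices `M^{ij}` supported on the entries
`(i,i), (i,j), (j,i), (j,j)` whose corresponding `2×2` submatrices are positive
semidefinite. -/
theorem isScaledDiagDom_iff_sum_psd_2x2 {n : ℕ} (hn : 2 ≤ n)
    (A : Matrix (Fin n) (Fin n) ℝ) (hA : A.IsSymm) :
    IsScaledDiagDom A ↔
      ∃ M : Fin n → Fin n → Matrix (Fin n) (Fin n) ℝ,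
        (∀ i j, i < j → (M i j).IsSymm) ∧
        (∀ i j, i < j → ∀ k l, ¬((k = i ∨ k = j) ∧ (l = i ∨ l = j)) → M i j k l = 0) ∧
        (∀ i j, i < j → ∀ s t : ℝ,
          0 ≤ s * s * M i j i i + s * t * M i j i j + t * s * M i j j i + t * t * M i j j j) ∧
        A = ∑ p ∈ Finset.univ.filter (fun p : Fin n × Fin n => p.1 < p.2), M p.1 p.2 := by
  rw [isScaledDiagDom_iff]
  constructor
  · rintro ⟨d, hd, hrow⟩
    obtain ⟨w, hw, hAw, hwsum⟩ := exists_pairWeights (by simpa using hn) hd hrow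
    exact ⟨pairMatrix A w, fun i j _ => pairMatrix_isSymm hA w i j,
      fun i j _ k l => pairMatrix_apply_eq_zero A w,
      fun i j hij => pairMatrix_form_nonneg hA hw hAw hij.ne, (sum_pairMatrix A hwsum).symm⟩
  · rintro ⟨M, hsymm, hsupp, hpsd, rfl⟩
    have hcop := isCopositive_comparison_sum (univ.filter fun p : Fin n × Fin n => p.1 < p.2)
      (fun p => M p.1 p.2) fun p hp => by
        have hlt := (mem_filter.1 hp).2
        exact isCopositive_comparison_of_pair (hsymm _ _ hlt) hlt.ne (hsupp _ _ hlt) (hpsd _ _ hlt)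
    obtain ⟨d, hd, hBd⟩ := exists_pos_mulVec_nonneg_of_isCopositive (comparison_isSymm hA)
      (fun i j => comparison_apply_nonpos _) hcop
    exact ⟨d, hd, fun i => sub_nonneg.1 (comparison_mulVec_apply _ d i ▸ hBd i)⟩
end

section
/- (Barker–Carlson) A real symmetric n×n matrix M is diagonally dominant if and only if it can be written as M = Σ_{v ∈ V_n} α_v · v vᵀ for some nonnegative coefficients α_v ≥ 0, where V_n is the finite set of nonzero vectors in ℝⁿ with at most 2 nonzero components, each of which equals +1 or −1. -/
open scoped Matrix

/-- `v` belongs to `V_n`: `v` is a nonzero vector in `ℝⁿ` with at most 2 nonzero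
components, each equal to `+1` or `-1`. -/
def MemVn {n : ℕ} (v : Fin n → ℝ) : Prop :=
  v ≠ 0 ∧ (∀ i, v i = 0 ∨ v i = 1 ∨ v i = -1) ∧
    ∃ i j : Fin n, ∀ k, k ≠ i → k ≠ j → v k = 0

theorem vn_finite (n : ℕ) : {v : Fin n → ℝ | MemVn v}.Finite := by
  have hsub : {v : Fin n → ℝ | MemVn v} ⊆
      Set.pi Set.univ (fun _ : Fin n => ({0, 1, -1} : Set ℝ)) := by
    intro v hv i _
    rcases hv.2.1 i with h | h | h <;> simp [h]
  exact (Set.Finite.pi (fun _ : Fin n =>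
    (Set.finite_singleton (-1 : ℝ)).insert 1 |>.insert 0)).subset hsub

/-- `V_n` as a finite set of vectors. -/
noncomputable def VnFinset (n : ℕ) : Finset (Fin n → ℝ) := (vn_finite n).toFinset


lemma dd_zero {n : ℕ} : IsDiagDom (0 : Matrix (Fin n) (Fin n) ℝ) := by
  intro i; simp

lemma dd_add {n : ℕ} {A B : Matrix (Fin n) (Fin n) ℝ} (hA : IsDiagDom A) (hB : IsDiagDom B) :
    IsDiagDom (A + B) := by
  intro i
  calc ∑ j ∈ Finset.univ.filter (fun j => j ≠ i), |(A + B) i j|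
      ≤ ∑ j ∈ Finset.univ.filter (fun j => j ≠ i), (|A i j| + |B i j|) :=
        Finset.sum_le_sum (fun j _ => abs_add_le _ _)
    _ = (∑ j ∈ Finset.univ.filter (fun j => j ≠ i), |A i j|)
        + ∑ j ∈ Finset.univ.filter (fun j => j ≠ i), |B i j| := Finset.sum_add_distrib
    _ ≤ A i i + B i i := add_le_add (hA i) (hB i)

lemma dd_smul_vvT {n : ℕ} {v : Fin n → ℝ} (hv : MemVn v) {c : ℝ} (hc : 0 ≤ c) :
    IsDiagDom (c • Matrix.vecMulVec v v) := by
  intro i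
  obtain ⟨a, b, hsupp⟩ := hv.2.2
  have hval : ∀ k, |v k| ≤ 1 := by
    intro k; rcases hv.2.1 k with h | h | h <;> simp [h]
  have hent : ∀ j, (c • Matrix.vecMulVec v v) i j = c * (v i * v j) := by
    intro j; simp [Matrix.vecMulVec_apply]
  by_cases hvi : v i = 0
  · simp [hent, hvi]
  · have hvi1 : |v i| = 1 := by
      rcases hv.2.1 i with h | h | h
      · exact absurd h hvi
      · simp [h]
      · simp [h]
    have hii : (c • Matrix.vecMulVec v v) i i = c := by
      rw [hent]
      have : v i * v i = 1 := by
        rcases hv.2.1 i with h | h | h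
        · exact absurd h hvi
        · simp [h]
        · simp [h]
      rw [this, mul_one]
    rw [hii]
    set o : Fin n := if i = a then b else a with ho
    have hother : ∀ k, k ≠ i → k ≠ o → v k = 0 := by
      intro k hki hko
      by_cases hia : i = a
      · exact hsupp k (hia ▸ hki) (by simpa [ho, hia] using hko)
      · have hib : i = b := by
          by_contra hib
          exact hvi (hsupp i (by exact hia) hib)
        exact hsupp k (by simpa [ho, hia] using hko) (hib ▸ hki)
    by_cases hoi : o = i
    · have : ∀ j ∈ Finset.univ.filter (fun j => j ≠ i), |(c • Matrix.vecMulVec v v) i j| = 0 := by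
        intro j hj
        simp only [Finset.mem_filter] at hj
        rw [hent, hother j hj.2 (hoi ▸ hj.2)]; simp
      rw [Finset.sum_congr rfl this]; simp [hc]
    · have hmem : o ∈ Finset.univ.filter (fun j => j ≠ i) := by simp [hoi]
      rw [Finset.sum_eq_single_of_mem o hmem]
      · rw [hent, abs_mul, abs_mul, hvi1, one_mul, abs_of_nonneg hc]
        calc c * |v o| ≤ c * 1 := by
              exact mul_le_mul_of_nonneg_left (hval o) hc
          _ = c := mul_one c
      · intro j hj hjo
        simp only [Finset.mem_filter] at hj
        rw [hent, hother j hj.2 hjo]; simp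

namespace BC

noncomputable def sgns : Finset ℝ := {1, -1}

lemma mem_sgns {σ : ℝ} (h : σ ∈ sgns) : σ = 1 ∨ σ = -1 := by
  simpa [sgns] using h

lemma sgns_ne_zero {σ : ℝ} (h : σ ∈ sgns) : σ ≠ 0 := by
  rcases mem_sgns h with h | h <;> simp [h]

noncomputable def f₁ {n : ℕ} (p : Fin n × ℝ) : Fin n → ℝ := Pi.single p.1 p.2

noncomputable def f₂ {n : ℕ} (p : (Fin n × Fin n) × (ℝ × ℝ)) : Fin n → ℝ :=
  Pi.single p.1.1 p.2.1 + Pi.single p.1.2 p.2.2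

noncomputable def A (n : ℕ) : Finset (Fin n × ℝ) := Finset.univ ×ˢ sgns

noncomputable def B (n : ℕ) : Finset ((Fin n × Fin n) × (ℝ × ℝ)) :=
  ((Finset.univ ×ˢ Finset.univ).filter (fun p : Fin n × Fin n => p.1 < p.2)) ×ˢ (sgns ×ˢ sgns)

/-- support of a vector -/
noncomputable def supp {n : ℕ} (v : Fin n → ℝ) : Finset (Fin n) :=
  Finset.univ.filter (fun k => v k ≠ 0)

lemma supp_single {n : ℕ} (i : Fin n) {c : ℝ} (hc : c ≠ 0) :
    supp (Pi.single i c) = {i} := by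
  ext k
  simp only [supp, Finset.mem_filter, Finset.mem_univ, true_and, Finset.mem_singleton,
    Pi.single_apply]
  by_cases h : k = i <;> simp [h, hc]

lemma supp_pair {n : ℕ} {i j : Fin n} (hij : i ≠ j) {c d : ℝ} (hc : c ≠ 0) (hd : d ≠ 0) :
    supp (Pi.single i c + Pi.single j d) = {i, j} := by
  ext k
  simp only [supp, Finset.mem_filter, Finset.mem_univ, true_and, Finset.mem_insert,
    Finset.mem_singleton, Pi.add_apply, Pi.single_apply]
  by_cases h : k = i
  · subst h; simp [hij, hc]
  · by_cases h' : k = j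
    · subst h'; simp [h, hd]
    · simp [h, h']

lemma memVn_f₁ {n : ℕ} {p : Fin n × ℝ} (hp : p ∈ A n) : MemVn (f₁ p) := by
  obtain ⟨i, σ⟩ := p
  simp only [A, Finset.mem_product, Finset.mem_univ, true_and] at hp
  have hσ := sgns_ne_zero hp
  refine ⟨?_, ?_, i, i, ?_⟩
  · intro h
    have := congrFun h i
    simp [f₁, hσ] at this
  · intro k
    simp only [f₁, Pi.single_apply]
    by_cases h : k = i
    · rcases mem_sgns hp with h' | h' <;> simp [h, h']
    · simp [h]
  · intro k hk _
    simp [f₁, Pi.single_apply, hk]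

lemma memVn_f₂ {n : ℕ} {p : (Fin n × Fin n) × (ℝ × ℝ)} (hp : p ∈ B n) : MemVn (f₂ p) := by
  obtain ⟨⟨i, j⟩, σ, τ⟩ := p
  simp only [B, Finset.mem_product, Finset.mem_filter, Finset.mem_univ, true_and] at hp
  obtain ⟨hij, hσ, hτ⟩ := hp
  have hij' : i ≠ j := ne_of_lt hij
  have hσ0 := sgns_ne_zero hσ
  have hτ0 := sgns_ne_zero hτ
  refine ⟨?_, ?_, i, j, ?_⟩
  · intro h
    have := congrFun h i
    simp [f₂, Pi.single_apply, hij'.symm, hσ0] at this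
  · intro k
    simp only [f₂, Pi.add_apply, Pi.single_apply]
    by_cases h : k = i
    · subst h
      rcases mem_sgns hσ with h' | h' <;> simp [hij', h']
    · by_cases h' : k = j
      · subst h'
        rcases mem_sgns hτ with h'' | h'' <;> simp [h, h'']
      · simp [h, h']
  · intro k hk hk'
    simp [f₂, Pi.single_apply, hk, hk']

lemma supp_f₂ {n : ℕ} {p : (Fin n × Fin n) × (ℝ × ℝ)} (hp : p ∈ B n) :
    supp (f₂ p) = {p.1.1, p.1.2} := by
  obtain ⟨⟨i, j⟩, σ, τ⟩ := p
  simp only [B, Finset.mem_product, Finset.mem_filter, Finset.mem_univ, true_and] at hp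
  exact supp_pair (ne_of_lt hp.1) (sgns_ne_zero hp.2.1) (sgns_ne_zero hp.2.2)

lemma classify {n : ℕ} {v : Fin n → ℝ} (hv : MemVn v) :
    v ∈ (A n).image f₁ ∨ v ∈ (B n).image f₂ := by
  obtain ⟨hne, hval, i₀, j₀, hsupp⟩ := hv
  have hsub : supp v ⊆ {i₀, j₀} := by
    intro k hk
    simp only [supp, Finset.mem_filter] at hk
    simp only [Finset.mem_insert, Finset.mem_singleton]
    by_contra h
    push_neg at h
    exact hk.2 (hsupp k h.1 h.2)
  have hcard2 : (supp v).card ≤ 2 := le_trans (Finset.card_le_card hsub)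
    (le_trans (Finset.card_insert_le _ _) (by simp))
  have hpos : 0 < (supp v).card := by
    rw [Finset.card_pos]
    obtain ⟨k, hk⟩ := Function.ne_iff.mp hne
    exact ⟨k, by simp only [supp, Finset.mem_filter, Finset.mem_univ, true_and]; simpa using hk⟩
  have hmem_s : ∀ k, v k ≠ 0 → k ∈ supp v := fun k hk => by simp [supp, hk]
  have hnot : ∀ k, k ∉ supp v → v k = 0 := by
    intro k hk
    by_contra h
    exact hk (hmem_s k h)
  interval_cases h : (supp v).card
  · -- card = 1
    obtain ⟨i, hi⟩ := Finset.card_eq_one.mp h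
    left
    have hvi : v i ≠ 0 := by
      have : i ∈ supp v := by rw [hi]; exact Finset.mem_singleton_self i
      simpa [supp] using this
    refine Finset.mem_image.mpr ⟨(i, v i), ?_, ?_⟩
    · simp only [A, Finset.mem_product, Finset.mem_univ, true_and]
      rcases hval i with h' | h' | h'
      · exact absurd h' hvi
      · simp [sgns, h']
      · simp [sgns, h']
    · funext k
      simp only [f₁, Pi.single_apply]
      by_cases hk : k = i
      · simp [hk]
      · rw [if_neg hk]
        exact (hnot k (by rw [hi]; simp [hk])).symm
  · -- card = 2
    obtain ⟨i, j, hij, hS⟩ := Finset.card_eq_two.mp h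
    right
    -- wlog i < j
    have main : ∀ i j : Fin n, i < j → supp v = {i, j} → v ∈ (B n).image f₂ := by
      intro i j hlt hS
      have hvi : v i ≠ 0 := by
        have : i ∈ supp v := by rw [hS]; simp
        simpa [supp] using this
      have hvj : v j ≠ 0 := by
        have : j ∈ supp v := by rw [hS]; simp
        simpa [supp] using this
      refine Finset.mem_image.mpr ⟨((i, j), (v i, v j)), ?_, ?_⟩
      · simp only [B, Finset.mem_product, Finset.mem_filter, Finset.mem_univ, true_and]
        refine ⟨hlt, ?_, ?_⟩
        · rcases hval i with h' | h' | h'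
          · exact absurd h' hvi
          · simp [sgns, h']
          · simp [sgns, h']
        · rcases hval j with h' | h' | h'
          · exact absurd h' hvj
          · simp [sgns, h']
          · simp [sgns, h']
      · funext k
        simp only [f₂, Pi.add_apply, Pi.single_apply]
        have hij := ne_of_lt hlt
        by_cases hk : k = i
        · subst hk; simp [hij]
        · by_cases hk' : k = j
          · subst hk'; simp [hk]
          · rw [if_neg hk, if_neg hk']
            rw [add_zero]
            exact (hnot k (by rw [hS]; simp [hk, hk'])).symm
    rcases hij.lt_or_gt with hlt | hlt
    · exact main i j hlt hS
    · exact main j i hlt (by rw [hS]; exact Finset.pair_comm i j)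

lemma f₁_injOn {n : ℕ} : Set.InjOn f₁ (A n : Set (Fin n × ℝ)) := by
  intro p hp q hq hpq
  obtain ⟨i, σ⟩ := p; obtain ⟨i', σ'⟩ := q
  simp only [A, Finset.coe_product, Set.mem_prod, Finset.mem_coe, Finset.mem_univ,
    true_and, Set.mem_univ] at hp hq
  have hσ := sgns_ne_zero (by simpa using hp)
  have hσ' := sgns_ne_zero (by simpa using hq)
  have hii : i = i' := by
    by_contra h
    have := congrFun hpq i
    simp [f₁, Pi.single_apply, h, hσ] at this
  subst hii
  have := congrFun hpq i
  simp only [f₁, Pi.single_apply, if_pos rfl] at this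
  simpa using this

lemma f₂_injOn {n : ℕ} : Set.InjOn f₂ (B n : Set ((Fin n × Fin n) × (ℝ × ℝ))) := by
  intro p hp q hq hpq
  obtain ⟨⟨i, j⟩, σ, τ⟩ := p; obtain ⟨⟨i', j'⟩, σ', τ'⟩ := q
  have hp' : ((i,j),(σ,τ)) ∈ B n := by simpa using hp
  have hq' : ((i',j'),(σ',τ')) ∈ B n := by simpa using hq
  simp only [B, Finset.mem_product, Finset.mem_filter, Finset.mem_univ, true_and] at hp' hq'
  obtain ⟨hij, hσ, hτ⟩ := hp'
  obtain ⟨hij', hσ', hτ'⟩ := hq'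
  have hs : ({i, j} : Finset (Fin n)) = {i', j'} := by
    have h1 := supp_pair (ne_of_lt hij) (sgns_ne_zero hσ) (sgns_ne_zero hτ)
    have h2 := supp_pair (ne_of_lt hij') (sgns_ne_zero hσ') (sgns_ne_zero hτ')
    rw [← h1, ← h2]
    simpa [f₂] using congrArg supp hpq
  have hi' : i = i' ∨ i = j' := by
    have : i ∈ ({i', j'} : Finset (Fin n)) := hs ▸ (by simp)
    simpa using this
  have hj' : j = i' ∨ j = j' := by
    have : j ∈ ({i', j'} : Finset (Fin n)) := hs ▸ (by simp)
    simpa using this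
  have hii : i = i' := by
    rcases hi' with h | h
    · exact h
    · rcases hj' with h2 | h2
      · have hji : j' < i' := by rw [← h, ← h2]; exact hij
        exact absurd hij' (lt_asymm hji)
      · exact absurd (h ▸ h2 ▸ hij) (lt_irrefl _)
  have hjj : j = j' := by
    rcases hj' with h | h
    · exact absurd (hii ▸ h ▸ hij) (lt_irrefl _)
    · exact h
  subst hii; subst hjj
  have h1 := congrFun hpq i
  have h2 := congrFun hpq j
  simp only [f₂, Pi.add_apply, Pi.single_apply, if_pos rfl, if_neg (ne_of_lt hij),
    if_neg (ne_of_gt hij)] at h1 h2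
  simp only [add_zero, zero_add] at h1 h2
  refine Prod.ext rfl (Prod.ext ?_ ?_) <;> simp_all
lemma supp_f₁ {n : ℕ} {p : Fin n × ℝ} (hp : p ∈ A n) : supp (f₁ p) = {p.1} := by
  obtain ⟨i, σ⟩ := p
  simp only [A, Finset.mem_product, Finset.mem_univ, true_and] at hp
  exact supp_single i (sgns_ne_zero hp)

lemma disj {n : ℕ} : Disjoint ((A n).image f₁) ((B n).image f₂) := by
  rw [Finset.disjoint_left]
  intro v hv1 hv2
  obtain ⟨p, hp, hpv⟩ := Finset.mem_image.mp hv1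
  obtain ⟨q, hq, hqv⟩ := Finset.mem_image.mp hv2
  have h1 : (supp v).card = 1 := by rw [← hpv, supp_f₁ hp]; simp
  have h2 : (supp v).card = 2 := by
    rw [← hqv, supp_f₂ hq]
    rw [Finset.card_insert_of_notMem (by
      simp only [B, Finset.mem_product, Finset.mem_filter] at hq
      simpa using ne_of_lt hq.1.2), Finset.card_singleton]
  omega

lemma Vn_eq (n : ℕ) : VnFinset n = (A n).image f₁ ∪ (B n).image f₂ := by
  ext v
  rw [VnFinset, Set.Finite.mem_toFinset, Set.mem_setOf_eq, Finset.mem_union]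
  constructor
  · exact classify
  · rintro (hv | hv)
    · obtain ⟨p, hp, hpv⟩ := Finset.mem_image.mp hv
      exact hpv ▸ memVn_f₁ hp
    · obtain ⟨p, hp, hpv⟩ := Finset.mem_image.mp hv
      exact hpv ▸ memVn_f₂ hp

lemma sum_split {n : ℕ} {X : Type*} [AddCommMonoid X] (g : (Fin n → ℝ) → X) :
    ∑ v ∈ VnFinset n, g v = (∑ p ∈ A n, g (f₁ p)) + ∑ p ∈ B n, g (f₂ p) := by
  rw [Vn_eq, Finset.sum_union disj,
    Finset.sum_image (fun x hx y hy h => f₁_injOn (by simpa using hx) (by simpa using hy) h),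
    Finset.sum_image (fun x hx y hy h => f₂_injOn (by simpa using hx) (by simpa using hy) h)]

open Classical in
noncomputable def alph {n : ℕ} (M : Matrix (Fin n) (Fin n) ℝ) (v : Fin n → ℝ) : ℝ :=
  if (∀ i, v i = 0 ∨ v i = 1 ∨ v i = -1) then
    (if (supp v).card = 1 then
      (∑ i ∈ supp v, (M i i - ∑ j ∈ Finset.univ.filter (fun j => j ≠ i), |M i j|)) / 2
     else
      (∑ i ∈ supp v, ∑ j ∈ (supp v).erase i, (|M i j| + v i * v j * M i j)) / 8)
  else 0

lemma alph_nonneg {n : ℕ} {M : Matrix (Fin n) (Fin n) ℝ} (hdd : IsDiagDom M) (v : Fin n → ℝ) :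
    0 ≤ alph M v := by
  rw [alph]
  split_ifs with h1 h2
  · apply div_nonneg _ (by norm_num)
    apply Finset.sum_nonneg
    intro i _
    have := hdd i
    linarith
  · apply div_nonneg _ (by norm_num)
    apply Finset.sum_nonneg
    intro i hi
    apply Finset.sum_nonneg
    intro j hj
    have hvi : v i ≠ 0 := by simpa [supp] using hi
    have hvj : v j ≠ 0 := by simpa [supp] using (Finset.mem_of_mem_erase hj)
    have habs : |v i * v j * M i j| = |M i j| := by
      rw [abs_mul, abs_mul]
      rcases h1 i with h | h | h
      · exact absurd h hvi
      all_goals rcases h1 j with h' | h' | h'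
      · exact absurd h' hvj
      all_goals (first | exact absurd h' hvj | simp [h, h'])
    have := neg_abs_le (v i * v j * M i j)
    rw [habs] at this
    linarith
  · exact le_refl _

lemma alph_f₁ {n : ℕ} (M : Matrix (Fin n) (Fin n) ℝ) {p : Fin n × ℝ} (hp : p ∈ A n) :
    alph M (f₁ p) =
      (M p.1 p.1 - ∑ j ∈ Finset.univ.filter (fun j => j ≠ p.1), |M p.1 j|) / 2 := by
  obtain ⟨i, σ⟩ := p
  simp only [A, Finset.mem_product, Finset.mem_univ, true_and] at hp
  have hσ := sgns_ne_zero hp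
  have hvals := (memVn_f₁ (p := (i, σ)) (by simp [A, hp])).2.1
  rw [alph, if_pos hvals, show supp (f₁ (i, σ)) = {i} from supp_single i hσ,
    if_pos (Finset.card_singleton i), Finset.sum_singleton]

lemma alph_f₂ {n : ℕ} {M : Matrix (Fin n) (Fin n) ℝ} (hM : M.IsSymm)
    {p : (Fin n × Fin n) × (ℝ × ℝ)} (hp : p ∈ B n) :
    alph M (f₂ p) = (|M p.1.1 p.1.2| + p.2.1 * p.2.2 * M p.1.1 p.1.2) / 4 := by
  obtain ⟨⟨i, j⟩, σ, τ⟩ := p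
  have hp' := hp
  simp only [B, Finset.mem_product, Finset.mem_filter, Finset.mem_univ, true_and] at hp'
  obtain ⟨hlt, hσ, hτ⟩ := hp'
  have hij : i ≠ j := ne_of_lt hlt
  have hσ0 := sgns_ne_zero hσ
  have hτ0 := sgns_ne_zero hτ
  have hvals := (memVn_f₂ hp).2.1
  have hsupp : supp (f₂ ((i, j), σ, τ)) = {i, j} := supp_f₂ hp
  have hcard : ({i, j} : Finset (Fin n)).card = 2 := by
    rw [Finset.card_insert_of_notMem (by simpa using hij), Finset.card_singleton]
  rw [alph, if_pos hvals, hsupp, if_neg (by omega)]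
  have hei : ({i, j} : Finset (Fin n)).erase i = {j} :=
    Finset.erase_insert (by simpa using hij)
  have hej : ({i, j} : Finset (Fin n)).erase j = {i} := by
    rw [Finset.pair_comm]
    exact Finset.erase_insert (by simpa using hij.symm)
  rw [Finset.sum_pair hij, hei, hej, Finset.sum_singleton, Finset.sum_singleton]
  have hwi : f₂ ((i, j), σ, τ) i = σ := by
    simp [f₂, Pi.single_apply, hij, hij.symm]
  have hwj : f₂ ((i, j), σ, τ) j = τ := by
    simp [f₂, Pi.single_apply, hij, hij.symm]
  have hMji : M j i = M i j := hM.apply i j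
  rw [hwi, hwj, hMji]
  ring

noncomputable def P (n : ℕ) : Finset (Fin n × Fin n) :=
  (Finset.univ ×ˢ Finset.univ).filter (fun p : Fin n × Fin n => p.1 < p.2)

noncomputable def ind {n : ℕ} (x y : Fin n) : ℝ := if x = y then 1 else 0

lemma sumA {n : ℕ} (M : Matrix (Fin n) (Fin n) ℝ) (a b : Fin n) :
    ∑ p ∈ A n, alph M (f₁ p) * (f₁ p a * f₁ p b)
      = if a = b then (M a a - ∑ j ∈ Finset.univ.filter (fun j => j ≠ a), |M a j|) else 0 := by
  rw [A, Finset.sum_product]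
  have inner : ∀ i : Fin n, ∑ σ ∈ sgns, alph M (f₁ (i, σ)) * (f₁ (i, σ) a * f₁ (i, σ) b)
      = if a = i then (if b = i then
          (M i i - ∑ j ∈ Finset.univ.filter (fun j => j ≠ i), |M i j|) else 0) else 0 := by
    intro i
    have m1 : ((i, (1:ℝ))) ∈ A n := by simp [A, sgns]
    have m2 : ((i, (-1:ℝ))) ∈ A n := by simp [A, sgns]
    rw [sgns, Finset.sum_pair (by norm_num : (1:ℝ) ≠ -1), alph_f₁ M m1, alph_f₁ M m2]
    simp only [f₁, Pi.single_apply]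
    by_cases ha : a = i <;> by_cases hb : b = i <;> simp [ha, hb] <;> ring
  rw [Finset.sum_congr rfl (fun i _ => inner i), Finset.sum_ite_eq]
  simp only [Finset.mem_univ, if_true]
  by_cases hab : a = b
  · subst hab; simp
  · simp [hab, Ne.symm hab]

lemma sumB {n : ℕ} {M : Matrix (Fin n) (Fin n) ℝ} (hM : M.IsSymm) (a b : Fin n) :
    ∑ p ∈ B n, alph M (f₂ p) * (f₂ p a * f₂ p b)
      = ∑ p ∈ P n,
          (|M p.1 p.2| * (ind a p.1 * ind b p.1) + |M p.1 p.2| * (ind a p.2 * ind b p.2)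
            + M p.1 p.2 * (ind a p.1 * ind b p.2) + M p.1 p.2 * (ind a p.2 * ind b p.1)) := by
  rw [B, show ((Finset.univ ×ˢ Finset.univ).filter (fun p : Fin n × Fin n => p.1 < p.2)) = P n
    from rfl, Finset.sum_product]
  apply Finset.sum_congr rfl
  intro p hp
  obtain ⟨i, j⟩ := p
  simp only [P, Finset.mem_filter, Finset.mem_product, Finset.mem_univ, true_and] at hp
  have hij : i ≠ j := ne_of_lt hp
  have mm : ∀ σ τ : ℝ, σ ∈ sgns → τ ∈ sgns → (((i, j)), (σ, τ)) ∈ B n := by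
    intro σ τ hσ hτ
    simp [B, hσ, hτ, hp]
  rw [Finset.sum_product]
  rw [show (sgns : Finset ℝ) = {1, -1} from rfl]
  rw [Finset.sum_pair (by norm_num : (1:ℝ) ≠ -1)]
  rw [Finset.sum_pair (by norm_num : (1:ℝ) ≠ -1),
    Finset.sum_pair (by norm_num : (1:ℝ) ≠ -1)]
  have hs1 : (1:ℝ) ∈ sgns := by simp [sgns]
  have hs2 : (-1:ℝ) ∈ sgns := by simp [sgns]
  rw [alph_f₂ hM (mm 1 1 hs1 hs1), alph_f₂ hM (mm 1 (-1) hs1 hs2),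
    alph_f₂ hM (mm (-1) 1 hs2 hs1), alph_f₂ hM (mm (-1) (-1) hs2 hs2)]
  simp only [f₂, Pi.add_apply, Pi.single_apply, ind]
  by_cases ha : a = i <;> by_cases haj : a = j <;> by_cases hb : b = i <;> by_cases hbj : b = j <;>
    first
      | (exact absurd (ha.symm.trans haj) hij)
      | (exact absurd (hb.symm.trans hbj) hij)
      | (simp [ha, haj, hb, hbj, hij, Ne.symm hij] <;> ring)

lemma L1 {n : ℕ} (c : Fin n → Fin n → ℝ) (a b : Fin n) :
    ∑ p ∈ P n, c p.1 p.2 * (ind a p.1 * ind b p.1)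
      = if a = b then ∑ j ∈ Finset.univ.filter (fun j => a < j), c a j else 0 := by
  by_cases hab : a = b
  · subst hab
    rw [if_pos rfl, P, Finset.sum_filter, Finset.sum_product]
    have inner : ∀ i : Fin n, (∑ j, if i < j then c i j * (ind a i * ind a i) else 0)
        = if a = i then (∑ j ∈ Finset.univ.filter (fun j => i < j), c i j) else 0 := by
      intro i
      by_cases hai : a = i
      · subst hai
        simp [ind, Finset.sum_filter]
      · simp [ind, hai]
    rw [Finset.sum_congr rfl (fun i _ => inner i), Finset.sum_ite_eq]
    simp
  · rw [if_neg hab]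
    apply Finset.sum_eq_zero
    intro p _
    obtain ⟨i, j⟩ := p
    by_cases h1 : a = i
    · have h2 : b ≠ i := fun h => hab (h1.trans h.symm)
      simp [ind, h2]
    · simp [ind, h1]

lemma L2 {n : ℕ} (c : Fin n → Fin n → ℝ) (a b : Fin n) :
    ∑ p ∈ P n, c p.1 p.2 * (ind a p.2 * ind b p.2)
      = if a = b then ∑ i ∈ Finset.univ.filter (fun i => i < a), c i a else 0 := by
  by_cases hab : a = b
  · subst hab
    rw [if_pos rfl, P, Finset.sum_filter, Finset.sum_product]
    have inner : ∀ i : Fin n, (∑ j, if i < j then c i j * (ind a j * ind a j) else 0)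
        = if i < a then c i a else 0 := by
      intro i
      have step : ∀ j, (if i < j then c i j * (ind a j * ind a j) else 0)
          = if a = j then (if i < j then c i j else 0) else 0 := by
        intro j
        by_cases haj : a = j <;> by_cases hij : i < j <;> simp [ind, haj, hij]
      rw [Finset.sum_congr rfl (fun j _ => step j), Finset.sum_ite_eq]
      simp
    rw [Finset.sum_congr rfl (fun i _ => inner i), ← Finset.sum_filter]
  · rw [if_neg hab]
    apply Finset.sum_eq_zero
    intro p _
    obtain ⟨i, j⟩ := p
    by_cases h1 : a = j
    · have h2 : b ≠ j := fun h => hab (h1.trans h.symm)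
      simp [ind, h2]
    · simp [ind, h1]

lemma L3 {n : ℕ} (c : Fin n → Fin n → ℝ) (a b : Fin n) :
    ∑ p ∈ P n, c p.1 p.2 * (ind a p.1 * ind b p.2)
      = if a < b then c a b else 0 := by
  by_cases hab : a < b
  · rw [if_pos hab, Finset.sum_eq_single_of_mem (a, b) (by simp [P, hab])]
    · simp [ind]
    · intro p hpP hne
      obtain ⟨i, j⟩ := p
      have : i ≠ a ∨ j ≠ b := by
        by_contra h
        push_neg at h
        exact hne (by rw [h.1, h.2])
      rcases this with h | h
      · simp [ind, Ne.symm h]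
      · simp [ind, Ne.symm h]
  · rw [if_neg hab]
    apply Finset.sum_eq_zero
    intro p hp
    obtain ⟨i, j⟩ := p
    simp only [P, Finset.mem_filter, Finset.mem_product, Finset.mem_univ, true_and] at hp
    by_cases h1 : a = i
    · by_cases h2 : b = j
      · exact absurd (by rw [h1, h2]; exact hp) hab
      · simp [ind, h2]
    · simp [ind, h1]

lemma L4 {n : ℕ} (c : Fin n → Fin n → ℝ) (a b : Fin n) :
    ∑ p ∈ P n, c p.1 p.2 * (ind a p.2 * ind b p.1)
      = if b < a then c b a else 0 := by
  by_cases hab : b < a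
  · rw [if_pos hab, Finset.sum_eq_single_of_mem (b, a) (by simp [P, hab])]
    · simp [ind]
    · intro p hpP hne
      obtain ⟨i, j⟩ := p
      have : i ≠ b ∨ j ≠ a := by
        by_contra h
        push_neg at h
        exact hne (by rw [h.1, h.2])
      rcases this with h | h
      · simp [ind, Ne.symm h]
      · simp [ind, Ne.symm h]
  · rw [if_neg hab]
    apply Finset.sum_eq_zero
    intro p hp
    obtain ⟨i, j⟩ := p
    simp only [P, Finset.mem_filter, Finset.mem_product, Finset.mem_univ, true_and] at hp
    by_cases h1 : a = j
    · by_cases h2 : b = i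
      · exact absurd (by rw [h1, h2]; exact hp) hab
      · simp [ind, h2]
    · simp [ind, h1]

lemma sum_ne_split {n : ℕ} (f : Fin n → ℝ) (a : Fin n) :
    ∑ j ∈ Finset.univ.filter (fun j => j ≠ a), f j
      = (∑ j ∈ Finset.univ.filter (fun j => a < j), f j)
        + ∑ j ∈ Finset.univ.filter (fun j => j < a), f j := by
  rw [← Finset.sum_union (by
    rw [Finset.disjoint_filter]
    intro x _ h1 h2
    exact absurd h1 (lt_asymm h2))]
  apply Finset.sum_congr _ (fun _ _ => rfl)
  ext j
  simp only [Finset.mem_filter, Finset.mem_union, Finset.mem_univ, true_and]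
  rw [ne_iff_lt_or_gt]
  tauto

lemma sumP {n : ℕ} {M : Matrix (Fin n) (Fin n) ℝ} (hM : M.IsSymm) (a b : Fin n) :
    ∑ p ∈ P n,
        (|M p.1 p.2| * (ind a p.1 * ind b p.1) + |M p.1 p.2| * (ind a p.2 * ind b p.2)
          + M p.1 p.2 * (ind a p.1 * ind b p.2) + M p.1 p.2 * (ind a p.2 * ind b p.1))
      = if a = b then ∑ j ∈ Finset.univ.filter (fun j => j ≠ a), |M a j| else M a b := by
  rw [Finset.sum_add_distrib, Finset.sum_add_distrib, Finset.sum_add_distrib,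
    L1 (fun i j => |M i j|) a b, L2 (fun i j => |M i j|) a b,
    L3 (fun i j => M i j) a b, L4 (fun i j => M i j) a b]
  by_cases hab : a = b
  · subst hab
    rw [if_pos rfl, if_pos rfl, if_pos rfl, sum_ne_split (fun j => |M a j|) a]
    have : ∀ i : Fin n, |M i a| = |M a i| := fun i => by rw [hM.apply]
    rw [Finset.sum_congr rfl (fun i _ => this i)]
    simp [lt_irrefl]
  · rw [if_neg hab, if_neg hab, if_neg hab]
    rcases (Ne.lt_or_gt hab) with h | h
    · rw [if_pos h, if_neg (lt_asymm h)]
      ring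
    · rw [if_neg (lt_asymm h), if_pos h, hM.apply]
      ring

end BC

/-- (Barker–Carlson) A real symmetric matrix `M` is diagonally dominant if and only if it
is a nonnegative combination `M = ∑_{v ∈ V_n} α_v · v vᵀ` of the rank-one matrices `v vᵀ`,
`v ∈ V_n`. -/
theorem isDiagDom_iff_conic_combination {n : ℕ}
    (M : Matrix (Fin n) (Fin n) ℝ) (hM : M.IsSymm) :
    IsDiagDom M ↔
      ∃ α : (Fin n → ℝ) → ℝ, (∀ v, 0 ≤ α v) ∧
        M = ∑ v ∈ VnFinset n, α v • Matrix.vecMulVec v v := by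
  constructor
  · intro hdd
    refine ⟨BC.alph M, BC.alph_nonneg hdd, ?_⟩
    rw [BC.sum_split (fun v => BC.alph M v • Matrix.vecMulVec v v)]
    ext a b
    rw [Matrix.add_apply, Matrix.sum_apply, Matrix.sum_apply]
    simp only [Matrix.smul_apply, Matrix.vecMulVec_apply, smul_eq_mul]
    rw [BC.sumA M a b, BC.sumB hM a b, BC.sumP hM a b]
    by_cases hab : a = b
    · subst hab
      rw [if_pos rfl, if_pos rfl]
      ring
    · rw [if_neg hab, if_neg hab, zero_add]
  · rintro ⟨α, hα, rfl⟩
    exact Finset.sum_induction _ IsDiagDom (fun _ _ hA hB => dd_add hA hB) dd_zero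
      (fun v hv => dd_smul_vvT ((vn_finite n).mem_toFinset.mp hv) (hα v))
end

section
/- Let X be a real symmetric n×n matrix. Then Tr(Q X) ≥ 0 for every symmetric diagonally dominant n×n matrix Q if and only if vᵀ X v ≥ 0 for every v ∈ V_n. (This is the description of the dual cone DD*_n of the cone of diagonally dominant matrices.) -/
open scoped Matrix

/-!
A symmetric diagonally dominant `Q` is a nonnegative combination of the rank-one matrices
`v vᵀ` with `v ∈ V_n`:
`Q = ∑ᵢ (Qᵢᵢ - ∑_{j ≠ i} |Qᵢⱼ|) eᵢeᵢᵀ + ½ ∑_{i ≠ j} |Qᵢⱼ| wᵢⱼwᵢⱼᵀ` with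
`wᵢⱼ = eᵢ + sign(Qᵢⱼ) eⱼ`. Since `Tr(v vᵀ X) = vᵀ X v`, pairing this with `X` shows that
`vᵀ X v ≥ 0` on `V_n` forces `Tr(Q X) ≥ 0`. Conversely, each `v vᵀ` with `v ∈ V_n` is itself
symmetric and diagonally dominant.
-/

open Matrix Finset

namespace Finset

variable {ι M : Type*} [Fintype ι] [DecidableEq ι] [AddCommMonoid M]

theorem sum_eq_add_sum_filter_ne (f : ι → M) (i : ι) :
    ∑ j, f j = f i + ∑ j ∈ univ.filter (· ≠ i), f j := by
  rw [filter_ne', add_sum_erase _ _ (mem_univ i)]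

theorem sum_sum_filter_ne_comm (f : ι → ι → M) :
    ∑ i, ∑ j ∈ univ.filter (· ≠ i), f i j = ∑ i, ∑ j ∈ univ.filter (· ≠ i), f j i := by
  simp_rw [sum_filter]
  rw [sum_comm]
  simp_rw [ne_comm]

end Finset

namespace Matrix

variable {ι R : Type*} [Fintype ι]

theorem trace_vecMulVec_self_mul [CommSemiring R] (v : ι → R) (X : Matrix ι ι R) :
    (vecMulVec v v * X).trace = v ⬝ᵥ X *ᵥ v := by
  rw [vecMulVec_mul, trace_vecMulVec, dotProduct_mulVec, dotProduct_comm]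

variable [DecidableEq ι]

theorem single_add_single_dotProduct_mulVec [CommSemiring R] (X : Matrix ι ι R) (i j : ι)
    (s : R) :
    (Pi.single i 1 + Pi.single j s) ⬝ᵥ X *ᵥ (Pi.single i 1 + Pi.single j s) =
      X i i + s * (X i j + X j i) + s ^ 2 * X j j := by
  simp only [mulVec_add, mulVec_single, MulOpposite.op_one, one_smul, op_smul_eq_smul,
    dotProduct_add, add_dotProduct, single_dotProduct, col_apply, one_mul, dotProduct_smul,
    smul_eq_mul]
  ring

theorem abs_mul_single_add_sign_dotProduct_mulVec (X : Matrix ι ι ℝ) (i j : ι) (a : ℝ) :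
    |a| * ((Pi.single i 1 + Pi.single j (SignType.sign a : ℝ)) ⬝ᵥ
        X *ᵥ (Pi.single i 1 + Pi.single j (SignType.sign a : ℝ))) =
      |a| * X i i + a * (X i j + X j i) + |a| * X j j := by
  have hsign : |a| * (SignType.sign a : ℝ) = a := abs_mul_sign a
  have hsign_sq : |a| * (SignType.sign a : ℝ) ^ 2 = |a| := by
    rw [sq, ← mul_assoc, hsign, self_mul_sign]
  rw [single_add_single_dotProduct_mulVec]
  linear_combination (X i j + X j i) * hsign + X j j * hsign_sq

-- The decomposition of `Q` from the header, paired with `X`;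
-- the summand for `i ≠ j` is `|Qᵢⱼ| wᵢⱼᵀ X wᵢⱼ`.
theorem IsSymm.trace_mul_eq_diag_add_offDiag {Q : Matrix ι ι ℝ} (hQ : Q.IsSymm)
    (X : Matrix ι ι ℝ) :
    (Q * X).trace = ∑ i, (Q i i - ∑ j ∈ univ.filter (· ≠ i), |Q i j|) * X i i +
      (1 / 2) * ∑ i, ∑ j ∈ univ.filter (· ≠ i),
        (|Q i j| * X i i + Q i j * (X i j + X j i) + |Q i j| * X j j) := by
  have htrace : (Q * X).trace =
      ∑ i, (Q i i * X i i + ∑ j ∈ univ.filter (· ≠ i), Q i j * X j i) :=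
    sum_congr rfl fun i _ => sum_eq_add_sum_filter_ne (fun j => Q i j * X j i) i
  have hcol : ∑ i, ∑ j ∈ univ.filter (· ≠ i), |Q i j| * X j j =
      ∑ i, ∑ j ∈ univ.filter (· ≠ i), |Q i j| * X i i := by
    rw [sum_sum_filter_ne_comm]
    simp_rw [hQ.apply]
  have hrow : ∑ i, ∑ j ∈ univ.filter (· ≠ i), Q i j * X i j =
      ∑ i, ∑ j ∈ univ.filter (· ≠ i), Q i j * X j i := by
    rw [sum_sum_filter_ne_comm]
    simp_rw [hQ.apply]
  rw [htrace]
  simp only [sum_add_distrib, mul_add, sub_mul, sum_mul, sum_sub_distrib, hcol, hrow]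
  ring

end Matrix

section Vn

variable {n : ℕ}

theorem memVn_single (i : Fin n) : MemVn (Pi.single i 1) := by
  refine ⟨fun h => by simpa using congrFun h i, fun k => ?_, i, i, fun k hk _ => by simp [hk]⟩
  by_cases hk : k = i <;> simp [hk]

theorem memVn_single_add_single {i j : Fin n} (hij : i ≠ j) (s : SignType) :
    MemVn (Pi.single i 1 + Pi.single j (s : ℝ)) := by
  refine ⟨fun h => by simpa [hij] using congrFun h i, fun k => ?_, i, j,
    fun k hki hkj => by simp [hki, hkj]⟩
  by_cases hki : k = i
  · simp [hki, hij]
  by_cases hkj : k = j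
  · subst hkj
    cases s <;> simp [hki]
  · simp [hki, hkj]

theorem MemVn.sum_abs_le_two {v : Fin n → ℝ} (hv : MemVn v) : ∑ k, |v k| ≤ 2 := by
  obtain ⟨-, hval, i, j, hsupp⟩ := hv
  calc ∑ k, |v k| = ∑ k ∈ {i, j}, |v k| :=
        (sum_subset (subset_univ _) fun k _ hk => by simp_all).symm
    _ ≤ #{i, j} • 1 :=
        sum_le_card_nsmul _ _ _ fun k _ => by rcases hval k with h | h | h <;> simp [h]
    _ ≤ 2 := by simpa using card_le_two

theorem MemVn.isDiagDom_vecMulVec {v : Fin n → ℝ} (hv : MemVn v) :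
    IsDiagDom (vecMulVec v v) := by
  intro i
  have htwo := hv.sum_abs_le_two
  rw [sum_eq_add_sum_filter_ne _ i] at htwo
  simp only [vecMulVec_apply, abs_mul, ← mul_sum]
  rcases hv.2.1 i with h | h | h <;> simp [h] at htwo ⊢ <;> linarith

end Vn

theorem mem_dual_dd_iff_general {n : ℕ} (X : Matrix (Fin n) (Fin n) ℝ) :
    (∀ Q : Matrix (Fin n) (Fin n) ℝ, Q.IsSymm → IsDiagDom Q → 0 ≤ (Q * X).trace) ↔
      (∀ v : Fin n → ℝ, MemVn v → 0 ≤ dotProduct v (X.mulVec v)) := by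
  constructor
  · intro h v hv
    simpa [trace_vecMulVec_self_mul] using
      h _ (transpose_vecMulVec v v) hv.isDiagDom_vecMulVec
  · intro h Q hQ hQdd
    rw [hQ.trace_mul_eq_diag_add_offDiag]
    refine add_nonneg (sum_nonneg fun i _ => mul_nonneg (sub_nonneg.2 (hQdd i)) ?_)
      (mul_nonneg (by norm_num) (sum_nonneg fun i _ => sum_nonneg fun j hj => ?_))
    · simpa using h _ (memVn_single i)
    · rw [← abs_mul_single_add_sign_dotProduct_mulVec]
      exact mul_nonneg (abs_nonneg _)
        (h _ (memVn_single_add_single (mem_filter.1 hj).2.symm _))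

/-- The dual cone of the diagonally dominant cone: for a real symmetric matrix `X`,
`Tr(Q X) ≥ 0` for every symmetric diagonally dominant `Q` if and only if
`vᵀ X v ≥ 0` for every `v ∈ V_n`. -/
theorem mem_dual_dd_iff {n : ℕ} (X : Matrix (Fin n) (Fin n) ℝ) (hX : X.IsSymm) :
    (∀ Q : Matrix (Fin n) (Fin n) ℝ, Q.IsSymm → IsDiagDom Q → 0 ≤ (Q * X).trace) ↔
      (∀ v : Fin n → ℝ, MemVn v → 0 ≤ dotProduct v (X.mulVec v)) :=
  mem_dual_dd_iff_general X
end

section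
/- Let n ≥ 2 and let X be a real symmetric n×n matrix. Then Tr(Q X) ≥ 0 for every symmetric scaled diagonally dominant n×n matrix Q if and only if for every pair of indices i < j the 2×2 matrix [[X_{ii}, X_{ij}], [X_{ji}, X_{jj}]] is positive semidefinite. (This is the description of the dual cone SDD*_n of the cone of scaled diagonally dominant matrices.) -/
open scoped Matrix

private lemma key_dd {n : ℕ} (Q Y : Matrix (Fin n) (Fin n) ℝ)
    (hQs : ∀ a b, Q b a = Q a b) (hYs : ∀ a b, Y b a = Y a b)
    (hdd : ∀ i, ∑ j ∈ Finset.univ.filter (fun j => j ≠ i), |Q i j| ≤ Q i i)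
    (hdiag : ∀ a, 0 ≤ Y a a)
    (hpair : ∀ a b, a ≠ b → ∀ s t : ℝ,
      0 ≤ s * s * Y a a + s * t * Y a b + t * s * Y b a + t * t * Y b b) :
    0 ≤ ∑ a, ∑ b, Q a b * Y a b := by
  classical
  set h : Fin n → Fin n → ℝ := fun a b =>
    if b = a then 0 else |Q a b| * Y a a + Q a b * Y a b with hh
  have hpairh : ∀ a b, 0 ≤ h a b + h b a := by
    intro a b
    by_cases hab : a = b
    · simp [hh, hab]
    · have hba : b ≠ a := fun e => hab e.symm
      simp only [hh, if_neg hab, if_neg hba]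
      rw [hQs a b, hYs a b]
      have p1 := hpair a b (hba ∘ Eq.symm) 1 1
      have p2 := hpair a b (hba ∘ Eq.symm) 1 (-1)
      rw [hYs a b] at p1 p2
      rcases le_or_gt 0 (Q a b) with hq0 | hq0
      · rw [abs_of_nonneg hq0]
        nlinarith [p1]
      · rw [abs_of_neg hq0]
        nlinarith [p2]
  have hT : ∀ a, ∑ b, h a b ≤ ∑ b, Q a b * Y a b := by
    intro a
    have e1 : ∑ b, Q a b * Y a b
        = Q a a * Y a a + ∑ b ∈ Finset.univ.filter (fun b => b ≠ a), Q a b * Y a b := by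
      rw [Finset.filter_ne', ← Finset.add_sum_erase _ _ (Finset.mem_univ a)]
    have e2 : ∑ b, h a b
        = ∑ b ∈ Finset.univ.filter (fun b => b ≠ a), (|Q a b| * Y a a + Q a b * Y a b) := by
      rw [Finset.sum_filter]
      apply Finset.sum_congr rfl
      intro b _
      by_cases hb : b = a <;> simp [hh, hb]
    rw [e1, e2, Finset.sum_add_distrib, ← Finset.sum_mul]
    have := mul_le_mul_of_nonneg_right (hdd a) (hdiag a)
    linarith
  have hTnn : 0 ≤ ∑ a, ∑ b, h a b := by
    have hcomm : ∑ a, ∑ b, h b a = ∑ a, ∑ b, h a b := Finset.sum_comm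
    have hs : 0 ≤ ∑ a, ∑ b, (h a b + h b a) :=
      Finset.sum_nonneg fun a _ => Finset.sum_nonneg fun b _ => hpairh a b
    have : ∑ a, ∑ b, (h a b + h b a) = ∑ a, ∑ b, h a b + ∑ a, ∑ b, h b a := by
      simp [Finset.sum_add_distrib]
    rw [this, hcomm] at hs
    linarith
  calc (0:ℝ) ≤ ∑ a, ∑ b, h a b := hTnn
    _ ≤ ∑ a, ∑ b, Q a b * Y a b := Finset.sum_le_sum fun a _ => hT a

/-- The dual cone of the scaled diagonally dominant cone: for a real symmetric matrix `X`
(`n ≥ 2`), `Tr(Q X) ≥ 0` for every symmetric scaled diagonally dominant `Q` if and only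
if every `2×2` principal submatrix `[[X_{ii}, X_{ij}], [X_{ji}, X_{jj}]]`, `i < j`, is
positive semidefinite. -/
theorem mem_dual_sdd_iff {n : ℕ} (hn : 2 ≤ n)
    (X : Matrix (Fin n) (Fin n) ℝ) (hX : X.IsSymm) :
    (∀ Q : Matrix (Fin n) (Fin n) ℝ, Q.IsSymm → IsScaledDiagDom Q → 0 ≤ (Q * X).trace) ↔
      (∀ i j : Fin n, i < j → ∀ s t : ℝ,
        0 ≤ s * s * X i i + s * t * X i j + t * s * X j i + t * t * X j j) := by
  classical
  have hX' : ∀ a b, X b a = X a b := fun a b => hX.apply a b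
  constructor
  · -- forward direction
    intro htr i j hij s t
    have hijne : i ≠ j := hij.ne
    have hji : j ≠ i := hij.ne'
    set v : Fin n → ℝ := fun k => if k = i then s else if k = j then t else 0 with hv
    have hvi : v i = s := by simp [hv]
    have hvj : v j = t := by simp [hv, hji]
    have hv0 : ∀ k, k ≠ i → k ≠ j → v k = 0 := by
      intro k h1 h2; simp [hv, h1, h2]
    have hsum : ∀ f : Fin n → ℝ, ∑ a, v a * f a = s * f i + t * f j := by
      intro f
      rw [← Finset.sum_subset (Finset.subset_univ ({i, j} : Finset (Fin n)))]
      · rw [Finset.sum_pair hijne, hvi, hvj]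
      · intro x _ hx
        simp only [Finset.mem_insert, Finset.mem_singleton, not_or] at hx
        rw [hv0 x hx.1 hx.2, zero_mul]
    set Q : Matrix (Fin n) (Fin n) ℝ := Matrix.of fun a b => v a * v b with hQ
    have hQsymm : Q.IsSymm := by
      show Qᵀ = Q
      ext a b
      simp [hQ, Matrix.transpose_apply, mul_comm]
    set d : Fin n → ℝ := fun k => if v k = 0 then 1 else |v k|⁻¹ with hd
    have hdpos : ∀ k, 0 < d k := by
      intro k
      by_cases h : v k = 0
      · simp [hd, h]
      · simp only [hd, if_neg h]
        exact inv_pos.mpr (abs_pos.mpr h)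
    set w : Fin n → ℝ := fun k => d k * v k with hw
    have hw1 : ∀ k, v k ≠ 0 → |w k| = 1 := by
      intro k h
      simp only [hw, hd, if_neg h]
      rw [abs_mul, abs_inv, abs_abs, inv_mul_cancel₀ (abs_ne_zero.mpr h)]
    have hwle : ∀ k, |w k| ≤ 1 := by
      intro k
      by_cases h : v k = 0
      · simp [hw, h]
      · rw [hw1 k h]
    have hw0 : ∀ k, k ≠ i → k ≠ j → w k = 0 := by
      intro k h1 h2; simp [hw, hv0 k h1 h2]
    have hentry : ∀ a b, (Matrix.diagonal d * Q * Matrix.diagonal d) a b = w a * w b := by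
      intro a b
      rw [Matrix.mul_diagonal, Matrix.diagonal_mul]
      simp only [hQ, Matrix.of_apply, hw]
      ring
    have hQsdd : IsScaledDiagDom Q := by
      refine ⟨d, hdpos, ?_⟩
      intro a
      have esum : ∀ b, |(Matrix.diagonal d * Q * Matrix.diagonal d) a b| = |w a| * |w b| := by
        intro b; rw [hentry, abs_mul]
      calc ∑ b ∈ Finset.univ.filter (fun b => b ≠ a),
            |(Matrix.diagonal d * Q * Matrix.diagonal d) a b|
          = |w a| * ∑ b ∈ Finset.univ.filter (fun b => b ≠ a), |w b| := by
            rw [Finset.mul_sum]; exact Finset.sum_congr rfl fun b _ => esum b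
        _ ≤ (Matrix.diagonal d * Q * Matrix.diagonal d) a a := by
            rw [hentry a a]
            by_cases ha : v a = 0
            · have : w a = 0 := by simp [hw, ha]
              simp [this]
            · have hwa : |w a| = 1 := hw1 a ha
              have haij : a = i ∨ a = j := by
                by_contra hc
                push_neg at hc
                exact ha (hv0 a hc.1 hc.2)
              have hbound : ∑ b ∈ Finset.univ.filter (fun b => b ≠ a), |w b| ≤ 1 := by
                rcases haij with rfl | rfl
                · rw [Finset.sum_eq_single_of_mem j
                    (Finset.mem_filter.mpr ⟨Finset.mem_univ j, hji⟩)
                    (fun b hbmem hbj => ?_)]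
                  · exact hwle j
                  · have hbi : b ≠ a := (Finset.mem_filter.mp hbmem).2
                    rw [abs_eq_zero]
                    exact hw0 b hbi hbj
                · rw [Finset.sum_eq_single_of_mem i
                    (Finset.mem_filter.mpr ⟨Finset.mem_univ i, hijne⟩)
                    (fun b hbmem hbi => ?_)]
                  · exact hwle i
                  · have hbj : b ≠ a := (Finset.mem_filter.mp hbmem).2
                    rw [abs_eq_zero]
                    exact hw0 b hbi hbj
              have : |w a| * ∑ b ∈ Finset.univ.filter (fun b => b ≠ a), |w b| ≤ 1 * 1 := by
                apply mul_le_mul (le_of_eq hwa) hbound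
                  (Finset.sum_nonneg fun b _ => abs_nonneg _) (by norm_num)
              calc |w a| * ∑ b ∈ Finset.univ.filter (fun b => b ≠ a), |w b| ≤ 1 := by linarith
                _ = |w a| * |w a| := by rw [hwa]; ring
                _ = w a * w a := abs_mul_abs_self _
    have htrace : (Q * X).trace = s * (s * X i i + t * X j i) + t * (s * X i j + t * X j j) := by
      have e0 : (Q * X).trace = ∑ a, ∑ b, v a * (v b * X b a) := by
        simp only [Matrix.trace, Matrix.mul_apply, Matrix.diag, hQ, Matrix.of_apply, mul_assoc]
      rw [e0]
      have e1 : ∀ a, ∑ b, v b * X b a = s * X i a + t * X j a := fun a => hsum fun b => X b a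
      calc ∑ a, ∑ b, v a * (v b * X b a)
          = ∑ a, v a * (s * X i a + t * X j a) := by
            apply Finset.sum_congr rfl
            intro a _
            rw [← Finset.mul_sum, e1 a]
        _ = s * (s * X i i + t * X j i) + t * (s * X i j + t * X j j) :=
            hsum fun a => s * X i a + t * X j a
    have h0 := htr Q hQsymm hQsdd
    rw [htrace] at h0
    have hx := hX' i j
    nlinarith [h0]
  · -- reverse direction
    rintro hpsd Q hQsymm ⟨d, hdpos, hdd⟩
    have hQ' : ∀ a b, Q b a = Q a b := fun a b => hQsymm.apply a b
    have hdne : ∀ k, d k ≠ 0 := fun k => (hdpos k).ne'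
    have hpsd' : ∀ a b, a ≠ b → ∀ s t : ℝ,
        0 ≤ s * s * X a a + s * t * X a b + t * s * X b a + t * t * X b b := by
      intro a b hab s t
      rcases hab.lt_or_gt with h | h
      · exact hpsd a b h s t
      · have := hpsd b a h t s
        linarith
    have hXdiag : ∀ a, 0 ≤ X a a := by
      intro a
      have hcard : 1 < Fintype.card (Fin n) := by simpa using lt_of_lt_of_le one_lt_two hn
      obtain ⟨b, hb⟩ := Fintype.exists_ne_of_one_lt_card hcard a
      have := hpsd' a b (Ne.symm hb) 1 0
      nlinarith [this]
    set Q2 : Matrix (Fin n) (Fin n) ℝ := Matrix.of fun a b => d a * Q a b * d b with hQ2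
    set Y : Matrix (Fin n) (Fin n) ℝ := Matrix.of fun a b => X a b / (d a * d b) with hY
    have hent : ∀ a b, (Matrix.diagonal d * Q * Matrix.diagonal d) a b = Q2 a b := by
      intro a b
      rw [Matrix.mul_diagonal, Matrix.diagonal_mul]
      simp [hQ2]
    have hQ2dd : ∀ a, ∑ b ∈ Finset.univ.filter (fun b => b ≠ a), |Q2 a b| ≤ Q2 a a := by
      intro a
      have := hdd a
      simp only [hent] at this
      exact this
    have htr2 : (Q * X).trace = ∑ a, ∑ b, Q2 a b * Y a b := by
      have e0 : (Q * X).trace = ∑ a, ∑ b, Q a b * X b a := by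
        simp only [Matrix.trace, Matrix.mul_apply, Matrix.diag]
      rw [e0]
      apply Finset.sum_congr rfl
      intro a _
      apply Finset.sum_congr rfl
      intro b _
      rw [hX' a b]
      simp only [hQ2, hY, Matrix.of_apply]
      calc Q a b * X a b = Q a b * X a b * ((d a * d b) / (d a * d b)) := by
            rw [div_self (mul_ne_zero (hdne a) (hdne b)), mul_one]
        _ = d a * Q a b * d b * (X a b / (d a * d b)) := by ring
    rw [htr2]
    apply key_dd
    · intro a b
      simp only [hQ2, Matrix.of_apply]
      rw [hQ' a b]; ring
    · intro a b
      simp only [hY, Matrix.of_apply]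
      rw [hX' a b, mul_comm (d b) (d a)]
    · exact hQ2dd
    · intro a
      simp only [hY, Matrix.of_apply]
      exact div_nonneg (hXdiag a) (le_of_lt (mul_pos (hdpos a) (hdpos a)))
    · intro a b hab s t
      have h := hpsd' a b hab (s / d a) (t / d b)
      simp only [hY, Matrix.of_apply]
      have e : s * s * (X a a / (d a * d a)) + s * t * (X a b / (d a * d b))
          + t * s * (X b a / (d b * d a)) + t * t * (X b b / (d b * d b))
          = s / d a * (s / d a) * X a a + s / d a * (t / d b) * X a b
          + t / d b * (s / d a) * X b a + t / d b * (t / d b) * X b b := by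
        field_simp
      linarith [h, e.ge, e.le]
end

section
/- Let X be a real symmetric n×n matrix such that vᵀ X v ≥ 0 for every v ∈ V_n, and suppose Tr(X) = 1. Then Σ_{i,j} X_{ij} ≤ n. (Consequently the first LP in the outer-approximation sequence for the Lovász theta number, which maximizes J·X subject to Tr(X)=1 and X ∈ DD*_n, is bounded above.) -/
open scoped Matrix

theorem memVn_single_sub_single {n : ℕ} {i j : Fin n} (hij : i ≠ j) :
    MemVn (Pi.single i 1 - Pi.single j 1 : Fin n → ℝ) := by
  refine ⟨fun h => by simpa [hij] using congrFun h i, fun k => ?_, i, j, fun k hki hkj => ?_⟩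
  · by_cases hki : k = i
    · subst hki; simp [hij]
    · by_cases hkj : k = j
      · subst hkj; simp [hki]
      · simp [hki, hkj]
  · simp [hki, hkj]

theorem dotProduct_mulVec_single_sub_single {ι R : Type*} [Fintype ι] [DecidableEq ι]
    [CommRing R] (X : Matrix ι ι R) (i j : ι) :
    (Pi.single i 1 - Pi.single j 1 : ι → R) ⬝ᵥ X *ᵥ (Pi.single i 1 - Pi.single j 1) =
      X i i - X i j - X j i + X j j := by
  simp only [Matrix.mulVec_sub, sub_dotProduct, dotProduct_sub, single_dotProduct,
    Matrix.mulVec_single_one, one_mul, Matrix.col_apply]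
  ring

theorem add_le_add_diag_of_memVn {n : ℕ} (X : Matrix (Fin n) (Fin n) ℝ)
    (hdual : ∀ v : Fin n → ℝ, MemVn v → 0 ≤ v ⬝ᵥ X *ᵥ v) (i j : Fin n) :
    X i j + X j i ≤ X i i + X j j := by
  rcases eq_or_ne i j with rfl | hij
  · rfl
  · have h := hdual _ (memVn_single_sub_single hij)
    rw [dotProduct_mulVec_single_sub_single] at h
    linarith

theorem Matrix.sum_sum_le_card_mul_trace {ι R : Type*} [Fintype ι] [Field R] [LinearOrder R]
    [IsStrictOrderedRing R] (X : Matrix ι ι R) (h : ∀ i j, X i j + X j i ≤ X i i + X j j) :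
    ∑ i, ∑ j, X i j ≤ Fintype.card ι * X.trace := by
  have hsum := Finset.sum_le_sum fun i (_ : i ∈ Finset.univ) =>
    Finset.sum_le_sum fun j (_ : j ∈ Finset.univ) => h i j
  simp only [Finset.sum_add_distrib, Finset.sum_const, Finset.card_univ, nsmul_eq_mul] at hsum
  rw [Finset.sum_comm (f := fun i j => X j i), ← Finset.mul_sum] at hsum
  simp only [Matrix.trace, Matrix.diag]
  linarith

theorem lovasz_outer_lp_bounded_general {n : ℕ} (X : Matrix (Fin n) (Fin n) ℝ)
    (hdual : ∀ v : Fin n → ℝ, MemVn v → 0 ≤ dotProduct v (X.mulVec v))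
    (htrace : X.trace = 1) :
    ∑ i, ∑ j, X i j ≤ (n : ℝ) := by
  calc ∑ i, ∑ j, X i j ≤ Fintype.card (Fin n) * X.trace :=
        X.sum_sum_le_card_mul_trace (add_le_add_diag_of_memVn X hdual)
    _ = n := by rw [htrace, Fintype.card_fin, mul_one]

/-- If `X` is real symmetric with `vᵀ X v ≥ 0` for every `v ∈ V_n` and `Tr(X) = 1`,
then `J · X = ∑_{i,j} X_{ij} ≤ n`; hence the first LP in the outer-approximation
sequence for the Lovász theta number is bounded above. -/
theorem lovasz_outer_lp_bounded {n : ℕ} (X : Matrix (Fin n) (Fin n) ℝ) (hX : X.IsSymm)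
    (hdual : ∀ v : Fin n → ℝ, MemVn v → 0 ≤ dotProduct v (X.mulVec v))
    (htrace : X.trace = 1) :
    ∑ i, ∑ j, X i j ≤ (n : ℝ) :=
  lovasz_outer_lp_bounded_general X hdual htrace
end

section
/- Let n ≥ 1 and let a₁, …, aₙ be positive integers. Define p_a : ℝⁿ → ℝ by p_a(x) = Σᵢ (xᵢ² − 1)² + (Σᵢ aᵢ xᵢ)². Then the partition instance a₁, …, aₙ is infeasible (i.e., there is no subset S ⊆ {1, …, n} with Σ_{i∈S} aᵢ = Σ_{i∉S} aᵢ) if and only if p_a(x) > 0 for all x ∈ ℝⁿ. -/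
/-- A partition instance `a₁, …, aₙ` of positive integers is infeasible (no subset `S`
satisfies `∑_{i∈S} aᵢ = ∑_{i∉S} aᵢ`) if and only if the polynomial
`p_a(x) = ∑ᵢ (xᵢ² − 1)² + (∑ᵢ aᵢ xᵢ)²` is strictly positive on all of `ℝⁿ`. -/
theorem partition_infeasible_iff_pa_pos {n : ℕ} (hn : 1 ≤ n)
    (a : Fin n → ℕ) (ha : ∀ i, 0 < a i) :
    (¬ ∃ S : Finset (Fin n), ∑ i ∈ S, a i = ∑ i ∈ Sᶜ, a i) ↔
      ∀ x : Fin n → ℝ,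
        0 < (∑ i, (x i ^ 2 - 1) ^ 2) + (∑ i, (a i : ℝ) * x i) ^ 2 := by
  constructor
  · intro hinf x
    by_contra hle
    push_neg at hle
    have h1 : (0:ℝ) ≤ ∑ i, (x i ^ 2 - 1) ^ 2 :=
      Finset.sum_nonneg fun i _ => sq_nonneg _
    have h2 : (0:ℝ) ≤ (∑ i, (a i : ℝ) * x i) ^ 2 := sq_nonneg _
    have hs1 : ∑ i, (x i ^ 2 - 1) ^ 2 = 0 := le_antisymm (by linarith) h1
    have hs2 : (∑ i, (a i : ℝ) * x i) ^ 2 = 0 := le_antisymm (by linarith) h2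
    have hx : ∀ i, x i = 1 ∨ x i = -1 := by
      intro i
      have := (Finset.sum_eq_zero_iff_of_nonneg (fun i _ => sq_nonneg _)).1 hs1 i
        (Finset.mem_univ i)
      have hxi : x i ^ 2 = 1 := by nlinarith [this]
      have : (x i - 1) * (x i + 1) = 0 := by ring_nf; nlinarith [hxi]
      rcases mul_eq_zero.1 this with h | h
      · left; linarith
      · right; linarith
    have hzero : ∑ i, (a i : ℝ) * x i = 0 := by
      exact pow_eq_zero_iff (n := 2) (by norm_num) |>.1 hs2
    apply hinf
    refine ⟨Finset.univ.filter (fun i => x i = 1), ?_⟩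
    have key : (∑ i ∈ Finset.univ.filter (fun i => x i = 1), (a i : ℝ)) =
        ∑ i ∈ (Finset.univ.filter (fun i => x i = 1))ᶜ, (a i : ℝ) := by
      have hsplit := Finset.sum_filter_add_sum_filter_not Finset.univ
        (fun i => x i = 1) (fun i => (a i : ℝ) * x i)
      rw [hzero] at hsplit
      have e1 : ∑ i ∈ Finset.univ.filter (fun i => x i = 1), (a i : ℝ) * x i =
          ∑ i ∈ Finset.univ.filter (fun i => x i = 1), (a i : ℝ) := by
        apply Finset.sum_congr rfl
        intro i hi
        rw [Finset.mem_filter] at hi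
        rw [hi.2, mul_one]
      have e2 : ∑ i ∈ Finset.univ.filter (fun i => ¬ x i = 1), (a i : ℝ) * x i =
          - ∑ i ∈ Finset.univ.filter (fun i => ¬ x i = 1), (a i : ℝ) := by
        rw [← Finset.sum_neg_distrib]
        apply Finset.sum_congr rfl
        intro i hi
        rw [Finset.mem_filter] at hi
        rcases hx i with h | h
        · exact absurd h hi.2
        · rw [h]; ring
      rw [e1, e2] at hsplit
      rw [Finset.compl_filter]
      linarith
    exact_mod_cast key
  · intro hpos ⟨S, hS⟩
    set x : Fin n → ℝ := fun i => if i ∈ S then 1 else -1 with hxdef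
    have := hpos x
    have h1 : ∑ i, (x i ^ 2 - 1) ^ 2 = 0 := by
      apply Finset.sum_eq_zero
      intro i _
      by_cases h : i ∈ S <;> simp [hxdef, h]
    have h2 : ∑ i, (a i : ℝ) * x i = 0 := by
      rw [← Finset.sum_filter_add_sum_filter_not Finset.univ (fun i => i ∈ S)]
      have e1 : ∑ i ∈ Finset.univ.filter (fun i => i ∈ S), (a i : ℝ) * x i =
          ∑ i ∈ S, (a i : ℝ) := by
        rw [Finset.filter_mem_eq_inter, Finset.univ_inter]
        apply Finset.sum_congr rfl
        intro i hi; simp [hxdef, hi]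
      have e2 : ∑ i ∈ Finset.univ.filter (fun i => ¬ i ∈ S), (a i : ℝ) * x i =
          - ∑ i ∈ Sᶜ, (a i : ℝ) := by
        rw [show Sᶜ = Finset.filter (fun i => i ∉ S) Finset.univ by
          ext i; simp, ← Finset.sum_neg_distrib]
        apply Finset.sum_congr rfl
        intro i hi
        rw [Finset.mem_filter] at hi
        simp [hxdef, hi.2]
      rw [e1, e2]
      have : (∑ i ∈ S, (a i : ℝ)) = ∑ i ∈ Sᶜ, (a i : ℝ) := by exact_mod_cast hS
      linarith
    rw [h1, h2] at this
    norm_num at this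
end

section
/- Consider the polynomial p ∈ ℝ[x₁, x₂, x₃, x₄, x₅] given by p = Σ_{i=1}^{5} (xᵢ² − 1)² + (x₁ + x₂ + x₃ + x₄ + x₅)². Then for every ε > 0, the polynomial p − ε is not a sum of squares of polynomials. (That is, the infeasible partition instance {1,1,1,1,1} is not sos-refutable.) -/
open MvPolynomial

/-! ### Auxiliary definitions: a pseudo-moment linear functional

`LL f` integrates `f` over the cube `{±1}⁵` against an explicit signed density.
It is an explicit "pseudo-expectation" certifying that the partition instance
`{1,1,1,1,1}` is not sos-refutable. -/

noncomputable def rb (b : Bool) : ℝ := if b then 1 else -1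

noncomputable def wgt (a b c d e : Bool) : ℝ :=
  ((rb a + rb b + rb c + rb d + rb e) ^ 4 - 30 * (rb a + rb b + rb c + rb d + rb e) ^ 2 + 149) / 2

noncomputable def LL (f : MvPolynomial (Fin 5) ℝ) : ℝ :=
  (1 / 1024) * ∑ a : Bool, ∑ b : Bool, ∑ c : Bool, ∑ d : Bool, ∑ e : Bool,
    wgt a b c d e * eval ![rb a, rb b, rb c, rb d, rb e] f

lemma LL_add (f g : MvPolynomial (Fin 5) ℝ) : LL (f + g) = LL f + LL g := by
  simp [LL, mul_add, Finset.sum_add_distrib]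

lemma LL_val (ε : ℝ) :
    LL ((∑ i : Fin 5, ((X i : MvPolynomial (Fin 5) ℝ) ^ 2 - 1) ^ 2) +
            (∑ i : Fin 5, (X i : MvPolynomial (Fin 5) ℝ)) ^ 2 - C ε) = -ε := by
  simp only [LL, wgt, map_sub, map_add, map_pow, map_sum, eval_X, eval_C,
    Fin.sum_univ_five, Fintype.sum_bool, rb]
  norm_num [Matrix.cons_val_two, Matrix.cons_val_three, Matrix.cons_val_four, Matrix.tail_cons, Matrix.head_cons]
  ring

/-! ### Monomials of degree at most two -/

lemma mono_class (m : Fin 5 →₀ ℕ) (hm : (m.sum fun _ e => e) ≤ 2) :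
    m = 0 ∨ (∃ i, m = Finsupp.single i 1) ∨
      (∃ i j, m = Finsupp.single i 1 + Finsupp.single j 1) := by
  have hdeg : m.degree ≤ 2 := by
    simpa [Finsupp.degree_apply, Finsupp.sum] using hm
  have hcard : m.support.card ≤ m.degree := by
    classical
    unfold Finsupp.degree
    calc m.support.card = ∑ i ∈ m.support, 1 := by simp
    _ ≤ ∑ i ∈ m.support, m i := by
        apply Finset.sum_le_sum
        intro i hi
        exact Nat.one_le_iff_ne_zero.2 (Finsupp.mem_support_iff.1 hi)
  have hcard2 : m.support.card ≤ 2 := hcard.trans hdeg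
  interval_cases h : m.support.card
  · left
    exact Finsupp.support_eq_empty.1 (Finset.card_eq_zero.1 h)
  · obtain ⟨a, ha⟩ := Finset.card_eq_one.1 h
    obtain ⟨hne, hm'⟩ := Finsupp.support_eq_singleton.1 ha
    have hma : m a ≤ 2 := by
      have := Finsupp.le_degree a m
      omega
    interval_cases h2 : m a
    · omega
    · right; left; exact ⟨a, hm'⟩
    · right; right
      refine ⟨a, a, ?_⟩
      rw [hm', ← Finsupp.single_add]
  · obtain ⟨a, b, hab, hs⟩ := Finset.card_eq_two.1 h
    have hma : m a ≠ 0 := Finsupp.mem_support_iff.1 (by rw [hs]; simp)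
    have hmb : m b ≠ 0 := Finsupp.mem_support_iff.1 (by rw [hs]; simp)
    have hsum : m a + m b ≤ 2 := by
      have : m.degree = m a + m b := by
        rw [Finsupp.degree_apply]
        rw [hs, Finset.sum_pair hab]
      omega
    have h1 : m a = 1 := by omega
    have h2 : m b = 1 := by omega
    right; right
    refine ⟨a, b, ?_⟩
    ext i
    rcases eq_or_ne i a with rfl | hia
    · simp [Finsupp.single_apply, hab.symm, h1]
    · rcases eq_or_ne i b with rfl | hib
      · simp [Finsupp.single_apply, hab, h2, Finsupp.single_apply_eq_zero]
      · have : i ∉ m.support := by rw [hs]; simp [hia, hib]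
        have h0 : m i = 0 := Finsupp.notMem_support_iff.1 this
        simp [h0, Finsupp.single_apply, Ne.symm hia, Ne.symm hib]

/-- Polynomials of degree at most two, written in a canonical form. -/
def InSpan (q : MvPolynomial (Fin 5) ℝ) : Prop :=
  ∃ (a : ℝ) (b : Fin 5 → ℝ) (d : Fin 5 → Fin 5 → ℝ),
    q = C a + (∑ i : Fin 5, C (b i) * X i) +
        ∑ i : Fin 5, ∑ j : Fin 5, C (d i j) * (X i * X j)

lemma inSpan_zero : InSpan 0 := by
  refine ⟨0, 0, 0, ?_⟩
  simp

lemma inSpan_add {q r : MvPolynomial (Fin 5) ℝ} (hq : InSpan q) (hr : InSpan r) :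
    InSpan (q + r) := by
  obtain ⟨a, b, d, rfl⟩ := hq
  obtain ⟨a', b', d', rfl⟩ := hr
  refine ⟨a + a', fun i => b i + b' i, fun i j => d i j + d' i j, ?_⟩
  simp only [map_add, add_mul, Finset.sum_add_distrib]
  ring

lemma inSpan_monomial (m : Fin 5 →₀ ℕ) (c : ℝ) (hm : (m.sum fun _ e => e) ≤ 2) :
    InSpan (monomial m c) := by
  rcases mono_class m hm with rfl | ⟨i0, rfl⟩ | ⟨i0, j0, rfl⟩
  · refine ⟨c, 0, 0, ?_⟩
    simp
  · refine ⟨0, fun i => if i = i0 then c else 0, 0, ?_⟩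
    rw [Finset.sum_eq_single_of_mem i0 (Finset.mem_univ _)]
    · simp [X, C_mul_monomial]
    · intro i _ hi
      simp [hi]
  · refine ⟨0, 0, fun i j => if i = i0 ∧ j = j0 then c else 0, ?_⟩
    have key : ∀ i j : Fin 5, C (if i = i0 ∧ j = j0 then c else 0) * (X i * X j)
        = if j = j0 then (if i = i0 then C c * (X i * X j) else 0) else 0 := by
      intro i j
      split_ifs with h1 h2 h3 <;> simp_all
    simp only [key, Finset.sum_ite_eq', Finset.mem_univ, if_true]
    simp [X, C_mul_monomial, monomial_mul]

lemma decomp (q : MvPolynomial (Fin 5) ℝ) (h : q.totalDegree ≤ 2) : InSpan q := by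
  rw [← support_sum_monomial_coeff q]
  apply Finset.sum_induction _ (p := InSpan) (fun _ _ => inSpan_add) inSpan_zero
  intro m hm
  exact inSpan_monomial _ _ ((le_totalDegree hm).trans h)

/-! ### Homogeneous component machinery: in a sum of squares of total degree at
most four, every summand has degree at most two. -/

lemma finsupp_degree_add (u v : Fin 5 →₀ ℕ) : (u + v).degree = u.degree + v.degree := by
  simp [Finsupp.degree_eq_weight_one, map_add]

lemma hc_mul {f g : MvPolynomial (Fin 5) ℝ} {m n : ℕ}
    (hf : f.totalDegree ≤ m) (hg : g.totalDegree ≤ n) :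
    homogeneousComponent (m + n) (f * g) =
      homogeneousComponent m f * homogeneousComponent n g := by
  classical
  ext d
  rw [coeff_homogeneousComponent]
  by_cases hd : d.degree = m + n
  · rw [if_pos hd, coeff_mul, coeff_mul]
    apply Finset.sum_congr rfl
    intro x hx
    rw [Finset.HasAntidiagonal.mem_antidiagonal] at hx
    have hsum : x.1.degree + x.2.degree = m + n := by
      rw [← finsupp_degree_add, hx, hd]
    rw [coeff_homogeneousComponent, coeff_homogeneousComponent]
    by_cases h1 : x.1.degree = m
    · have h2 : x.2.degree = n := by omega
      rw [if_pos h1, if_pos h2]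
    · rw [if_neg h1]
      rcases Nat.lt_or_ge x.1.degree m with hlt | hge
      · have h2 : n < x.2.degree := by omega
        have hz : coeff x.2 g = 0 :=
          coeff_eq_zero_of_totalDegree_lt (lt_of_le_of_lt hg h2)
        simp [hz]
      · have h1' : m < x.1.degree := lt_of_le_of_ne hge (Ne.symm h1)
        have hz : coeff x.1 f = 0 :=
          coeff_eq_zero_of_totalDegree_lt (lt_of_le_of_lt hf h1')
        simp [hz]
  · rw [if_neg hd]
    exact (((homogeneousComponent_isHomogeneous m f).mul
      (homogeneousComponent_isHomogeneous n g)).coeff_eq_zero hd).symm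

lemma finsupp_degree_sum (m : Fin 5 →₀ ℕ) : (m.sum fun _ e => e) = m.degree := rfl

lemma hc_top_ne_zero {q : MvPolynomial (Fin 5) ℝ} (hq : q ≠ 0) :
    homogeneousComponent q.totalDegree q ≠ 0 := by
  classical
  obtain ⟨m, hm, hdeg⟩ :=
    Finset.exists_mem_eq_sup q.support (support_nonempty.2 hq) (fun s => s.sum fun _ e => e)
  intro hzero
  have hc : coeff m (homogeneousComponent q.totalDegree q) = coeff m q := by
    rw [coeff_homogeneousComponent, if_pos]
    rw [← finsupp_degree_sum, ← hdeg]
    rfl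
  rw [hzero, coeff_zero] at hc
  exact mem_support_iff.1 hm hc.symm

lemma real_msum_zero (t : Multiset ℝ) (h0 : ∀ x ∈ t, 0 ≤ x) (h : t.sum = 0) :
    ∀ x ∈ t, x = 0 := by
  induction t using Multiset.induction with
  | empty => intro x hx; simp at hx
  | cons a t ih =>
    intro x hx
    rw [Multiset.sum_cons] at h
    have ha : 0 ≤ a := h0 a (Multiset.mem_cons_self a t)
    have ht : 0 ≤ t.sum := Multiset.sum_nonneg fun y hy => h0 y (Multiset.mem_cons_of_mem hy)
    rcases Multiset.mem_cons.1 hx with rfl | hx'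
    · linarith
    · exact ih (fun y hy => h0 y (Multiset.mem_cons_of_mem hy)) (by linarith) x hx'

lemma sq_msum_zero (t : Multiset (MvPolynomial (Fin 5) ℝ))
    (h : (t.map fun q => q * q).sum = 0) : ∀ q ∈ t, q = 0 := by
  intro q hq
  have hx : ∀ x : Fin 5 → ℝ, eval x q = eval x 0 := by
    intro x
    have he : ((t.map fun q => eval x q * eval x q)).sum = 0 := by
      have h' := congrArg (eval x) h
      rw [map_multiset_sum, Multiset.map_map] at h'
      simpa [Function.comp] using h'
    have := real_msum_zero _ (fun y hy => by
        obtain ⟨r, _, rfl⟩ := Multiset.mem_map.1 hy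
        exact mul_self_nonneg _) he (eval x q * eval x q)
        (Multiset.mem_map_of_mem _ hq)
    have h2 : eval x q = 0 := by nlinarith [this]
    simp [h2]
  exact MvPolynomial.funext hx

lemma msup_attained (t : Multiset ℕ) (h : t.sup ≠ 0) : ∃ a ∈ t, a = t.sup := by
  induction t using Multiset.induction with
  | empty => simp at h
  | cons a t ih =>
    rw [Multiset.sup_cons] at h ⊢
    rcases le_total a t.sup with hle | hle
    · rw [sup_eq_right.2 hle] at h ⊢
      obtain ⟨b, hb, hb2⟩ := ih h
      exact ⟨b, Multiset.mem_cons_of_mem hb, hb2⟩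
    · rw [sup_eq_left.2 hle]
      exact ⟨a, Multiset.mem_cons_self a t, rfl⟩

lemma deg_summand {s : Multiset (MvPolynomial (Fin 5) ℝ)}
    (hF : ((s.map fun q => q * q).sum).totalDegree ≤ 4) :
    ∀ q ∈ s, q.totalDegree ≤ 2 := by
  by_contra hcon
  push_neg at hcon
  obtain ⟨q0, hq0, hd0⟩ := hcon
  set D := (s.map totalDegree).sup with hD
  have hD3 : 3 ≤ D := le_trans hd0 (Multiset.le_sup (Multiset.mem_map_of_mem _ hq0))
  have hdegle : ∀ q ∈ s, q.totalDegree ≤ D :=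
    fun q hq => Multiset.le_sup (Multiset.mem_map_of_mem _ hq)
  have h1 : homogeneousComponent (D + D) ((s.map fun q => q * q).sum) = 0 :=
    homogeneousComponent_eq_zero _ _ (lt_of_le_of_lt hF (by omega))
  have h2 : homogeneousComponent (D + D) ((s.map fun q => q * q).sum)
      = ((s.map fun q => (homogeneousComponent D q) * (homogeneousComponent D q))).sum := by
    rw [map_multiset_sum, Multiset.map_map]
    congr 1
    apply Multiset.map_congr rfl
    intro q hq
    exact hc_mul (hdegle q hq) (hdegle q hq)
  have h3 := sq_msum_zero (s.map (homogeneousComponent D)) (by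
    rw [Multiset.map_map]
    rw [← h2.symm.trans h1]
    apply congrArg
    apply Multiset.map_congr rfl
    intro q hq
    rfl)
  obtain ⟨d1, hd1, hd1eq⟩ := msup_attained (s.map totalDegree) (by omega)
  obtain ⟨q1, hq1, rfl⟩ := Multiset.mem_map.1 hd1
  have hq1ne : q1 ≠ 0 := by
    intro hzero
    rw [hzero] at hd1eq
    simp [totalDegree_zero] at hd1eq
    omega
  have := hc_top_ne_zero hq1ne
  rw [hd1eq] at this
  exact this (h3 _ (Multiset.mem_map_of_mem _ hq1))

/-! ### The certificate: `LL` is nonnegative on squares of quadratics -/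

set_option maxHeartbeats 2000000 in
lemma key (A : ℝ) (B : Fin 5 → ℝ) (D : Fin 5 → Fin 5 → ℝ) :
    0 ≤ ∑ a : Bool, ∑ b : Bool, ∑ c : Bool, ∑ d : Bool, ∑ e : Bool,
      wgt a b c d e *
        ((A + (∑ i : Fin 5, B i * ![rb a, rb b, rb c, rb d, rb e] i) +
            ∑ i : Fin 5, ∑ j : Fin 5,
              D i j * (![rb a, rb b, rb c, rb d, rb e] i * ![rb a, rb b, rb c, rb d, rb e] j)) *
         (A + (∑ i : Fin 5, B i * ![rb a, rb b, rb c, rb d, rb e] i) +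
            ∑ i : Fin 5, ∑ j : Fin 5,
              D i j * (![rb a, rb b, rb c, rb d, rb e] i * ![rb a, rb b, rb c, rb d, rb e] j))) := by
  have hid : (∑ a : Bool, ∑ b : Bool, ∑ c : Bool, ∑ d : Bool, ∑ e : Bool,
      wgt a b c d e *
        ((A + (∑ i : Fin 5, B i * ![rb a, rb b, rb c, rb d, rb e] i) +
            ∑ i : Fin 5, ∑ j : Fin 5,
              D i j * (![rb a, rb b, rb c, rb d, rb e] i * ![rb a, rb b, rb c, rb d, rb e] j)) *
         (A + (∑ i : Fin 5, B i * ![rb a, rb b, rb c, rb d, rb e] i) +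
            ∑ i : Fin 5, ∑ j : Fin 5,
              D i j * (![rb a, rb b, rb c, rb d, rb e] i * ![rb a, rb b, rb c, rb d, rb e] j))))
      = 64*(4*A + 4*(D 0 0 + D 1 1 + D 2 2 + D 3 3 + D 4 4) - (D 0 1 + D 1 0) - (D 0 2 + D 2 0) - (D 0 3 + D 3 0) - (D 0 4 + D 4 0) - (D 1 2 + D 2 1) - (D 1 3 + D 3 1) - (D 1 4 + D 4 1) - (D 2 3 + D 3 2) - (D 2 4 + D 4 2) - (D 3 4 + D 4 3))^2
      + 64*(4*B 0 - B 1 - B 2 - B 3 - B 4)^2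
      + (320/3)*(3*B 1 - B 2 - B 3 - B 4)^2
      + (640/3)*(2*B 2 - B 3 - B 4)^2
      + 640*(B 3 - B 4)^2
      + (320/3)*(3*(D 0 1 + D 1 0) - (D 0 2 + D 2 0) - (D 0 3 + D 3 0) - (D 0 4 + D 4 0) - (D 1 2 + D 2 1) - (D 1 3 + D 3 1) - (D 1 4 + D 4 1) + (D 2 3 + D 3 2) + (D 2 4 + D 4 2) + (D 3 4 + D 4 3))^2
      + (160/3)*(4*(D 0 2 + D 2 0) - 2*(D 0 3 + D 3 0) - 2*(D 0 4 + D 4 0) - 2*(D 1 2 + D 2 1) + (D 1 3 + D 3 1) + (D 1 4 + D 4 1) - (D 2 3 + D 3 2) - (D 2 4 + D 4 2) + 2*(D 3 4 + D 4 3))^2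
      + 160*(2*(D 0 3 + D 3 0) - 2*(D 0 4 + D 4 0) - (D 1 3 + D 3 1) + (D 1 4 + D 4 1) - (D 2 3 + D 3 2) + (D 2 4 + D 4 2))^2
      + 160*(2*(D 1 2 + D 2 1) - (D 1 3 + D 3 1) - (D 1 4 + D 4 1) - (D 2 3 + D 3 2) - (D 2 4 + D 4 2) + 2*(D 3 4 + D 4 3))^2
      + 480*((D 1 3 + D 3 1) - (D 1 4 + D 4 1) - (D 2 3 + D 3 2) + (D 2 4 + D 4 2))^2 := by
    simp only [Fintype.sum_bool, Fin.sum_univ_five, wgt, rb, if_true, if_false,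
      Matrix.cons_val_zero, Matrix.cons_val_one, Matrix.head_cons, Matrix.cons_val_two,
      Matrix.tail_cons, Matrix.cons_val_three, Matrix.cons_val_four, Bool.cond_true,
      Bool.cond_false]
    norm_num
    ring
  rw [hid]
  positivity

lemma LL_sq_nonneg (q : MvPolynomial (Fin 5) ℝ) (h : q.totalDegree ≤ 2) :
    0 ≤ LL (q * q) := by
  obtain ⟨a0, b0, d0, hq⟩ := decomp q h
  have he : ∀ v : Fin 5 → ℝ, eval v q =
      a0 + (∑ i : Fin 5, b0 i * v i) + ∑ i : Fin 5, ∑ j : Fin 5, d0 i j * (v i * v j) := by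
    intro v
    rw [hq]
    simp [mul_comm]
  simp only [LL, map_mul, he]
  exact mul_nonneg (by norm_num) (key a0 b0 d0)

/-! ### Assembling the proof -/

lemma LL_msum (s : Multiset (MvPolynomial (Fin 5) ℝ)) :
    LL ((s.map fun q => q * q).sum) = ((s.map fun q => LL (q * q))).sum := by
  induction s using Multiset.induction with
  | empty => simp [LL]
  | cons a t ih => simp [LL_add, ih]

lemma isSumSq_exists_multiset {F : MvPolynomial (Fin 5) ℝ} (h : IsSumSq F) :
    ∃ s : Multiset (MvPolynomial (Fin 5) ℝ), F = (s.map fun q => q * q).sum := by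
  induction h with
  | zero => exact ⟨0, by simp⟩
  | sq_add a pS ih =>
    obtain ⟨s, rfl⟩ := ih
    exact ⟨a ::ₘ s, by simp⟩

lemma degF (ε : ℝ) :
    ((∑ i : Fin 5, ((X i : MvPolynomial (Fin 5) ℝ) ^ 2 - 1) ^ 2) +
        (∑ i : Fin 5, (X i : MvPolynomial (Fin 5) ℝ)) ^ 2 - C ε).totalDegree ≤ 4 := by
  refine le_trans (totalDegree_sub_C_le _ _) ?_
  refine le_trans (totalDegree_add _ _) (max_le ?_ ?_)
  · refine le_trans (totalDegree_finset_sum _ _) ?_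
    apply Finset.sup_le
    intro i _
    have h1 : ((X i : MvPolynomial (Fin 5) ℝ) ^ 2 - 1).totalDegree ≤ 2 := by
      refine (totalDegree_sub _ _).trans (max_le ?_ ?_)
      · exact (totalDegree_pow _ _).trans (by simp [totalDegree_X])
      · simp [totalDegree_one]
    calc (((X i : MvPolynomial (Fin 5) ℝ) ^ 2 - 1) ^ 2).totalDegree
        ≤ 2 * ((X i : MvPolynomial (Fin 5) ℝ) ^ 2 - 1).totalDegree := totalDegree_pow _ _
      _ ≤ 4 := by omega
  · have h2 : (∑ i : Fin 5, (X i : MvPolynomial (Fin 5) ℝ)).totalDegree ≤ 1 := by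
      refine le_trans (totalDegree_finset_sum _ _) ?_
      apply Finset.sup_le
      intro i _
      simp [totalDegree_X]
    calc ((∑ i : Fin 5, (X i : MvPolynomial (Fin 5) ℝ)) ^ 2).totalDegree
        ≤ 2 * (∑ i : Fin 5, (X i : MvPolynomial (Fin 5) ℝ)).totalDegree := totalDegree_pow _ _
      _ ≤ 4 := by omega

/-- The infeasible partition instance `{1,1,1,1,1}` is not sos-refutable: for the
polynomial `p = ∑_{i=1}^{5} (xᵢ² − 1)² + (x₁ + x₂ + x₃ + x₄ + x₅)²` and every `ε > 0`,
the polynomial `p − ε` is not a sum of squares of polynomials. -/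
theorem ones_instance_not_sos_refutable :
    ∀ ε : ℝ, 0 < ε →
      ¬ IsSumSq
        ((∑ i : Fin 5, ((X i : MvPolynomial (Fin 5) ℝ) ^ 2 - 1) ^ 2) +
            (∑ i : Fin 5, (X i : MvPolynomial (Fin 5) ℝ)) ^ 2 - C ε) := by
  intro ε hε hsos
  obtain ⟨s, hs⟩ := isSumSq_exists_multiset hsos
  have hdeg4 := degF ε
  rw [hs] at hdeg4
  have hq2 := deg_summand hdeg4
  have hL : LL ((s.map fun q => q * q).sum) = -ε := by
    rw [← hs]
    exact LL_val ε
  have hpos : 0 ≤ LL ((s.map fun q => q * q).sum) := by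
    rw [LL_msum]
    apply Multiset.sum_nonneg
    intro x hx
    obtain ⟨q, hqs, rfl⟩ := Multiset.mem_map.1 hx
    exact LL_sq_nonneg q (hq2 q hqs)
  linarith
end
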